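/- arXiv:1408.5615 — 6 statements merged into one kernel-verified Lean document; each statement's English description precedes it below -/
import Mathlib

section
/- For all m, n : ℕ, the real matrix A + n·I is positive semidefinite, where A is the adjacency matrix of the simplicial rook graph SR(m,n) and I is the identity matrix indexed by the vertex set of SR(m,n). -/
open Matrix Polynomial

/-- Vertices of the simplicial rook graph: nonnegative integer vectors of length `m` summing to `n`. -/
abbrev SRVertex (m n : ℕ) : Type := {x : Fin m → ℕ // ∑ i, x i = n}

instance (m n : ℕ) : Fintype (SRVertex m n) :=
  Fintype.subtype (Finset.Nat.antidiagonalTuple m n) fun _ =>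
    Finset.Nat.mem_antidiagonalTuple

/-- The simplicial rook graph `SR(m,n)`. -/
def SR (m n : ℕ) : SimpleGraph (SRVertex m n) where
  Adj x y := (Finset.univ.filter fun i => x.1 i ≠ y.1 i).card = 2
  symm := by
    constructor
    intro x y h
    have : (Finset.univ.filter fun i => y.1 i ≠ x.1 i)
        = (Finset.univ.filter fun i => x.1 i ≠ y.1 i) := by
      apply Finset.filter_congr
      intro i _
      simp [ne_comm]
    rw [this]; exact h
  loopless := by
    constructor
    intro x h
    simp at h

instance (m n : ℕ) : DecidableRel (SR m n).Adj := fun x y =>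
  inferInstanceAs (Decidable ((Finset.univ.filter fun i => x.1 i ≠ y.1 i).card = 2))

/-!
Group the vertices of `SR(m,n)` into the lines `{w + k • eᵢ | i}` with `k ≥ 1` and `∑ w = n - k`.
Two distinct vertices are adjacent exactly when they lie on a common line, and then on only one;
a vertex `x` lies on one line for each `i` and each `1 ≤ k ≤ xᵢ`, so on `∑ xᵢ = n` lines.
Hence `A + n • 1 = ∑_L 1_L 1_Lᵀ`, a sum of positive semidefinite matrices.
-/

open Finset

theorem SimpleGraph.adjMatrix_add_smul_one_posSemidef_of_cliquePartition {V ι : Type*} [Fintype V]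
    [DecidableEq V] (G : SimpleGraph V) [DecidableRel G.Adj] (s : Finset ι) (C : ι → Finset V)
    (d : ℕ) (hdeg : ∀ x, #{c ∈ s | x ∈ C c} = d)
    (hadj : ∀ x y, x ≠ y → #{c ∈ s | x ∈ C c ∧ y ∈ C c} = if G.Adj x y then 1 else 0) :
    (G.adjMatrix ℝ + (d : ℝ) • 1).PosSemidef := by
  set v : ι → V → ℝ := fun c x => if x ∈ C c then 1 else 0
  have hgram : ∀ x y, (∑ c ∈ s, vecMulVec (v c) (star (v c))) x y
      = #{c ∈ s | x ∈ C c ∧ y ∈ C c} := by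
    intro x y
    simp only [Matrix.sum_apply, vecMulVec_apply, star_trivial, v, ite_zero_mul_ite_zero, mul_one,
      sum_boole]
  have hsum : G.adjMatrix ℝ + (d : ℝ) • 1 = ∑ c ∈ s, vecMulVec (v c) (star (v c)) := by
    ext x y
    rw [hgram]
    rcases eq_or_ne x y with rfl | hxy
    · simp [hdeg]
    · simp [hadj x y hxy, one_apply_ne hxy]
  exact hsum ▸ posSemidef_sum s fun c _ => posSemidef_vecMulVec_self_star (v c)

namespace SR

variable {m n : ℕ}

def line (n : ℕ) (p : ℕ × (Fin m → ℕ)) : Finset (SRVertex m n) :=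
  {x | ∃ i, x.1 = p.2 + Pi.single i p.1}

/-- Lines `line n (k, w)` with `∑ w ≠ n - k` are empty, so a box containing all the others will do. -/
def lineIndex (m n : ℕ) : Finset (ℕ × (Fin m → ℕ)) :=
  Icc 1 n ×ˢ Iic fun _ => n

lemma mem_line {p : ℕ × (Fin m → ℕ)} {x : SRVertex m n} :
    x ∈ line n p ↔ ∃ i, x.1 = p.2 + Pi.single i p.1 := by
  simp [line]

lemma apply_le (x : SRVertex m n) (i : Fin m) : x.1 i ≤ n :=
  (single_le_sum (fun _ _ => Nat.zero_le _) (mem_univ i)).trans_eq x.2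

lemma ne_and_ne_zero_of_add_single_ne {w : Fin m → ℕ} {i j : Fin m} {k : ℕ}
    (h : w + Pi.single i k ≠ w + Pi.single j k) : i ≠ j ∧ k ≠ 0 := by
  constructor <;> rintro rfl <;> simp at h

lemma mem_lineIndex_of_mem_line {x : SRVertex m n} {p : ℕ × (Fin m → ℕ)} (hk : p.1 ≠ 0)
    (hx : x ∈ line n p) : p ∈ lineIndex m n := by
  obtain ⟨i, hi⟩ := mem_line.1 hx
  simp only [lineIndex, mem_product, mem_Icc, mem_Iic, Pi.le_def]
  have hxi := congrFun hi i
  have := apply_le x i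
  refine ⟨⟨by omega, by simp only [Pi.add_apply, Pi.single_eq_same] at hxi; omega⟩, fun t => ?_⟩
  have hxt := congrFun hi t
  have := apply_le x t
  simp only [Pi.add_apply] at hxt
  omega

lemma eq_of_mem_line {x y : SRVertex m n} (hxy : x ≠ y) {p q : ℕ × (Fin m → ℕ)}
    (hxp : x ∈ line n p) (hyp : y ∈ line n p) (hxq : x ∈ line n q) (hyq : y ∈ line n q) :
    p = q := by
  obtain ⟨i, hi⟩ := mem_line.1 hxp
  obtain ⟨j, hj⟩ := mem_line.1 hyp
  obtain ⟨i', hi'⟩ := mem_line.1 hxq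
  obtain ⟨j', hj'⟩ := mem_line.1 hyq
  have hxy' : x.1 ≠ y.1 := Subtype.coe_injective.ne hxy
  obtain ⟨hij, hk⟩ := ne_and_ne_zero_of_add_single_ne (hi ▸ hj ▸ hxy')
  obtain ⟨hij', hk'⟩ := ne_and_ne_zero_of_add_single_ne (hi' ▸ hj' ▸ hxy')
  -- `i` is the only coordinate in which `x` exceeds `y`, and `p.1` is the excess
  have hii' : i = i' := by
    by_contra h
    have h1 := congrFun hi i
    have h2 := congrFun hj i
    have h3 := congrFun hi' i
    have h4 := congrFun hj' i
    simp only [Pi.add_apply, Pi.single_eq_same, Pi.single_eq_of_ne hij, Pi.single_eq_of_ne h,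
      Pi.single_apply] at h1 h2 h3 h4
    split_ifs at h4 <;> omega
  subst hii'
  have h1 := congrFun hi i
  have h2 := congrFun hj i
  have h3 := congrFun hi' i
  have h4 := congrFun hj' i
  simp only [Pi.add_apply, Pi.single_eq_same, Pi.single_eq_of_ne hij,
    Pi.single_eq_of_ne hij'] at h1 h2 h3 h4
  have hkk : p.1 = q.1 := by omega
  refine Prod.ext hkk (funext fun t => ?_)
  have h5 := congrFun hi t
  have h6 := congrFun hi' t
  simp only [Pi.add_apply, Pi.single_apply, hkk] at h5 h6
  omega

lemma add_eq_add_of_eqOn_compl_pair {x y : Fin m → ℕ} (hsum : ∑ t, x t = ∑ t, y t) {a b : Fin m}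
    (hab : a ≠ b) (hrest : ∀ t, t ≠ a → t ≠ b → x t = y t) : x a + x b = y a + y b := by
  have hcompl : ∑ t ∈ {a, b}ᶜ, x t = ∑ t ∈ {a, b}ᶜ, y t :=
    sum_congr rfl fun t ht => hrest t (by simp_all) (by simp_all)
  rw [← sum_add_sum_compl {a, b} x, ← sum_add_sum_compl {a, b} y, hcompl] at hsum
  simpa [sum_pair hab] using hsum

lemma exists_line_of_lt {x y : SRVertex m n} {a b : Fin m} (hab : a ≠ b) (hlt : y.1 a < x.1 a)
    (hsum : x.1 a + x.1 b = y.1 a + y.1 b) (hrest : ∀ t, t ≠ a → t ≠ b → x.1 t = y.1 t) :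
    ∃ p, x ∈ line n p ∧ y ∈ line n p := by
  refine ⟨(x.1 a - y.1 a, Function.update x.1 a (y.1 a)), mem_line.2 ⟨a, ?_⟩, mem_line.2 ⟨b, ?_⟩⟩
  all_goals
    funext t
    rcases eq_or_ne t a with rfl | hta
    · simp only [Pi.add_apply, Function.update_self, Pi.single_eq_same, Pi.single_eq_of_ne hab,
        add_zero] <;> omega
    rcases eq_or_ne t b with rfl | htb
    · simp only [Pi.add_apply, Function.update_of_ne hta, Pi.single_eq_same,
        Pi.single_eq_of_ne hta, add_zero] <;> omega
    simp [hta, htb, hrest t hta htb]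

theorem adj_iff_exists_line {x y : SRVertex m n} :
    (SR m n).Adj x y ↔ x ≠ y ∧ ∃ p, x ∈ line n p ∧ y ∈ line n p := by
  constructor
  · intro hxy
    refine ⟨hxy.ne, ?_⟩
    obtain ⟨a, b, hab, hdiff⟩ := card_eq_two.mp hxy
    have hne : ∀ t, x.1 t ≠ y.1 t ↔ t = a ∨ t = b := by simpa [Finset.ext_iff] using hdiff
    have hrest : ∀ t, t ≠ a → t ≠ b → x.1 t = y.1 t := fun t hta htb => by
      by_contra h
      exact (hne t).1 h |>.elim hta htb
    have hsum := add_eq_add_of_eqOn_compl_pair (x.2.trans y.2.symm) hab hrest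
    rcases lt_or_gt_of_ne ((hne a).2 (Or.inl rfl)) with hlt | hlt
    · exact (exists_line_of_lt hab hlt hsum.symm fun t hta htb => (hrest t hta htb).symm).imp
        fun _ => And.symm
    · exact exists_line_of_lt hab hlt hsum hrest
  · rintro ⟨hxy, p, hx, hy⟩
    obtain ⟨i, hi⟩ := mem_line.1 hx
    obtain ⟨j, hj⟩ := mem_line.1 hy
    obtain ⟨hij, hk⟩ := ne_and_ne_zero_of_add_single_ne (hi ▸ hj ▸ Subtype.coe_injective.ne hxy)
    show #{t | x.1 t ≠ y.1 t} = 2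
    convert card_pair hij
    ext t
    rcases eq_or_ne t i with rfl | hti
    · simp [hi, hj, hij, hk]
    rcases eq_or_ne t j with rfl | htj
    · simp [hi, hj, hti, Ne.symm hk]
    simp [hi, hj, hti, htj]

theorem card_filter_mem_line (x : SRVertex m n) : #{p ∈ lineIndex m n | x ∈ line n p} = n := by
  calc #{p ∈ lineIndex m n | x ∈ line n p}
      = #(univ.sigma fun i => Icc 1 (x.1 i)) := by
        symm
        refine card_bij (fun q _ => (q.2, x.1 - Pi.single q.1 q.2)) ?_ ?_ ?_
        · rintro ⟨i, k⟩ hq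
          simp only [mem_sigma, mem_univ, mem_Icc, true_and] at hq
          have hx : x ∈ line n (k, x.1 - Pi.single i k) := mem_line.2 ⟨i, funext fun t => by
            rcases eq_or_ne t i with rfl | hti
            · simp only [Pi.add_apply, Pi.sub_apply, Pi.single_eq_same]; omega
            · simp [hti]⟩
          exact mem_filter.2 ⟨mem_lineIndex_of_mem_line (Nat.pos_iff_ne_zero.1 hq.1) hx, hx⟩
        · rintro ⟨i, k⟩ hq ⟨i', k'⟩ - heq
          simp only [mem_sigma, mem_univ, mem_Icc, true_and] at hq
          obtain ⟨rfl, hw⟩ := Prod.mk.inj heq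
          obtain rfl : i = i' := by
            by_contra h
            have := congrFun hw i
            simp only [Pi.sub_apply, Pi.single_eq_same, Pi.single_eq_of_ne h, tsub_zero] at this
            omega
          rfl
        · rintro ⟨k, w⟩ hp
          obtain ⟨hp, hx⟩ := mem_filter.1 hp
          obtain ⟨i, hi⟩ := mem_line.1 hx
          refine ⟨⟨i, k⟩, ?_, ?_⟩
          · have := congrFun hi i
            simp only [lineIndex, mem_product, mem_Icc] at hp
            simp only [Pi.add_apply, Pi.single_eq_same, mem_sigma, mem_univ, mem_Icc, true_and]
              at this ⊢
            omega
          · simp [hi]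
    _ = n := by simp [card_sigma, x.2]

theorem card_filter_mem_line_and_mem_line {x y : SRVertex m n} (hxy : x ≠ y) :
    #{p ∈ lineIndex m n | x ∈ line n p ∧ y ∈ line n p} = if (SR m n).Adj x y then 1 else 0 := by
  split_ifs with h
  · obtain ⟨-, p, hx, hy⟩ := adj_iff_exists_line.1 h
    obtain ⟨i, hi⟩ := mem_line.1 hx
    obtain ⟨j, hj⟩ := mem_line.1 hy
    obtain ⟨-, hk⟩ := ne_and_ne_zero_of_add_single_ne (hi ▸ hj ▸ Subtype.coe_injective.ne hxy)
    refine card_eq_one.2 ⟨p, ext fun q => ?_⟩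
    simp only [mem_filter, mem_singleton]
    constructor
    · rintro ⟨-, hxq, hyq⟩
      exact (eq_of_mem_line hxy hx hy hxq hyq).symm
    · rintro rfl
      exact ⟨mem_lineIndex_of_mem_line hk hx, hx, hy⟩
  · refine card_eq_zero.2 (filter_eq_empty_iff.2 ?_)
    rintro p - ⟨hx, hy⟩
    exact h (adj_iff_exists_line.2 ⟨hxy, p, hx, hy⟩)

end SR

/-- `A + n·I` is positive semidefinite, where `A` is the adjacency matrix of `SR(m,n)`. -/
theorem SR_adjMatrix_add_smul_one_posSemidef (m n : ℕ) :
    ((SR m n).adjMatrix ℝ + (n : ℝ) • 1).PosSemidef :=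
  (SR m n).adjMatrix_add_smul_one_posSemidef_of_cliquePartition (SR.lineIndex m n) (SR.line n) n
    SR.card_filter_mem_line fun _ _ => SR.card_filter_mem_line_and_mem_line
end

section
/- Let m ≥ 1. The dimension of the eigenspace {v | A v = −C(m,2)·v} of the adjacency matrix A of SR(m,n) for the eigenvalue −C(m,2) equals the binomial coefficient C(n − C(m−1,2), m−1), where this binomial coefficient is interpreted as 0 when n < C(m−1,2). -/
/-!
For a pair `{i, j}` of coordinates, let `L_{ij}` be the matrix of the relation "`x` and `y` agree
outside `{i, j}`". The pairs containing the set of coordinates where `x` and `y` differ number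
`C(m,2)` if `x = y`, one if `x ~ y` and none otherwise (the coordinate sums force at least two
differences), so `∑ L_{ij} = A + C(m,2) I`. Each `L_{ij}` is positive semidefinite, its quadratic
form being a sum of squares of fiber sums, hence `A v = -C(m,2) v` iff all fiber sums of `v`
vanish. Encode `v` as the homogeneous polynomial `∑ v(x) X^x` of degree `n`: the `{i, j}`-fiber
sums vanish iff substituting `X_i := X_j` kills it, i.e. iff `X_i - X_j` divides it. So the
eigenspace is the space of multiples of the Vandermonde product `∏_{i<j} (X_i - X_j)` of degree
`n`, isomorphic to the homogeneous polynomials of degree `n - C(m,2)`, whose dimension is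
`C(n - C(m,2) + m - 1, m - 1) = C(n - C(m-1,2), m - 1)`.
-/

open Matrix Polynomial

open MvPolynomial Finset

section FiberSums
variable {V W : Type*} [Fintype V] [DecidableEq W]

theorem sum_mul_sum_fiber_eq_sum_sq (g : V → W) (v : V → ℝ) :
    ∑ x, v x * ∑ y with g y = g x, v y =
      ∑ w ∈ univ.image g, (∑ y with g y = w, v y) ^ 2 := by
  rw [← sum_fiberwise_of_maps_to fun x _ => mem_image_of_mem g (mem_univ x)]
  refine sum_congr rfl fun w _ => ?_
  rw [sq, sum_mul]
  exact sum_congr rfl fun x hx => by rw [(mem_filter.mp hx).2]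

theorem sum_mul_sum_fiber_nonneg (g : V → W) (v : V → ℝ) :
    0 ≤ ∑ x, v x * ∑ y with g y = g x, v y := by
  rw [sum_mul_sum_fiber_eq_sum_sq]
  positivity

theorem sum_fiber_eq_zero_of_sum_mul_sum_fiber_eq_zero {g : V → W} {v : V → ℝ}
    (h : ∑ x, v x * ∑ y with g y = g x, v y = 0) (x : V) : ∑ y with g y = g x, v y = 0 := by
  rw [sum_mul_sum_fiber_eq_sum_sq, sum_eq_zero_iff_of_nonneg fun _ _ => sq_nonneg _] at h
  exact (pow_eq_zero_iff two_ne_zero).mp (h _ (mem_image_of_mem g (mem_univ x)))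

end FiberSums

theorem Finset.forall_mem_powersetCard_two_iff {α : Type*} [Fintype α] [LinearOrder α]
    {P : Finset α → Prop} :
    (∀ s ∈ powersetCard 2 univ, P s) ↔ ∀ i j : α, i < j → P {i, j} := by
  refine ⟨fun h i j hij => h _ (mem_powersetCard.mpr ⟨subset_univ _, card_pair hij.ne⟩), ?_⟩
  intro h s hs
  obtain ⟨i, j, hij, rfl⟩ := card_eq_two.mp (mem_powersetCard.mp hs).2
  rcases hij.lt_or_gt with hlt | hgt
  · exact h i j hlt
  · exact pair_comm j i ▸ h j i hgt

theorem Finsupp.mapDomain_update_id {α M : Type*} [DecidableEq α] [AddCommMonoid M] (i j : α)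
    (d : α →₀ M) : d.mapDomain (Function.update id i j) = d.erase i + single j (d i) := by
  conv_lhs => rw [← single_add_erase i d]
  rw [mapDomain_add, mapDomain_single, Function.update_self, add_comm,
    mapDomain_congr (g := id), mapDomain_id]
  intro k hk
  rw [Function.update_of_ne (by rintro rfl; simp at hk)]

namespace MvPolynomial

section Monomials
variable {σ R : Type*} [CommSemiring R] [DecidableEq σ]

theorem sum_monomial_eq_zero_iff {V : Type*} [Fintype V] (e : V → σ →₀ ℕ) (v : V → R) :
    ∑ x, monomial (e x) (v x) = 0 ↔ ∀ x, ∑ y with e y = e x, v y = 0 := by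
  have hcoeff : ∀ u, coeff u (∑ x, monomial (e x) (v x)) = ∑ y with e y = u, v y := by
    intro u
    simp [coeff_sum, coeff_monomial, sum_filter]
  constructor
  · intro h x
    rw [← hcoeff, h, coeff_zero]
  · intro h
    ext u
    rw [hcoeff, coeff_zero]
    by_cases hu : ∃ x, e x = u
    · obtain ⟨x, rfl⟩ := hu
      exact h x
    · exact sum_eq_zero fun y hy => absurd ⟨y, (mem_filter.mp hy).2⟩ hu

end Monomials

section Homogeneous
variable {σ R : Type*} [CommRing R]

attribute [local instance] MvPolynomial.gradedAlgebra in
theorem homogeneousComponent_mul_of_isHomogeneous_left {c : ℕ} {D : MvPolynomial σ R}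
    (hD : D.IsHomogeneous c) (G : MvPolynomial σ R) (n : ℕ) :
    homogeneousComponent n (D * G) = if c ≤ n then D * homogeneousComponent (n - c) G else 0 := by
  simp_rw [← decomposition.decompose'_apply]
  exact DirectSum.coe_decompose_mul_of_left_mem (homogeneousSubmodule σ R) n
    ((mem_homogeneousSubmodule c D).mpr hD)

theorem IsHomogeneous.eq_mul_homogeneousComponent {c n : ℕ} {D F G : MvPolynomial σ R}
    (hD : D.IsHomogeneous c) (hF : F.IsHomogeneous n) (hcn : c ≤ n) (h : F = D * G) :
    F = D * homogeneousComponent (n - c) G := by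
  rw [← homogeneousComponent_eq_self hF, h, homogeneousComponent_mul_of_isHomogeneous_left hD,
    if_pos hcn]

theorem IsHomogeneous.eq_zero_of_dvd_of_lt {c n : ℕ} {D F : MvPolynomial σ R}
    (hD : D.IsHomogeneous c) (hF : F.IsHomogeneous n) (hDF : D ∣ F) (hnc : n < c) : F = 0 := by
  obtain ⟨G, rfl⟩ := hDF
  rw [← homogeneousComponent_eq_self hF, homogeneousComponent_mul_of_isHomogeneous_left hD,
    if_neg hnc.not_ge]

end Homogeneous

section LinearFactors
variable {σ R : Type*} [CommRing R] [DecidableEq σ]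

theorem X_sub_X_dvd_sub_rename_update (i j : σ) (F : MvPolynomial σ R) :
    X i - X j ∣ F - rename (Function.update id i j) F := by
  induction F using MvPolynomial.induction_on with
  | C a => simp
  | add p q hp hq => simpa [add_sub_add_comm] using dvd_add hp hq
  | mul_X p k hp =>
    have hk : X i - X j ∣ (X k - X (Function.update id i j k) : MvPolynomial σ R) := by
      by_cases hki : k = i <;> simp [hki]
    rw [map_mul, rename_X, show p * X k - rename (Function.update id i j) p *
        X (Function.update id i j k) = (p - rename (Function.update id i j) p) * X k +
        rename (Function.update id i j) p * (X k - X (Function.update id i j k)) by ring]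
    exact dvd_add (dvd_mul_of_dvd_left hp _) (dvd_mul_of_dvd_right hk _)

theorem X_sub_X_dvd_iff_rename_update_eq_zero {i j : σ} (hij : i ≠ j) (F : MvPolynomial σ R) :
    X i - X j ∣ F ↔ rename (Function.update id i j) F = 0 := by
  constructor
  · rintro ⟨G, rfl⟩
    simp [hij.symm]
  · intro h
    simpa [h] using X_sub_X_dvd_sub_rename_update (R := R) i j F

theorem prime_X_sub_X [IsDomain R] {i j : σ} (hij : i ≠ j) :
    Prime (X i - X j : MvPolynomial σ R) := by
  refine ⟨sub_ne_zero.mpr fun h => hij (X_injective h), fun hu => ?_, fun a b hab => ?_⟩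
  · simpa using (X_sub_X_dvd_iff_rename_update_eq_zero hij 1).mp hu.dvd
  · simpa only [X_sub_X_dvd_iff_rename_update_eq_zero hij, map_mul, mul_eq_zero] using hab

end LinearFactors

section Vandermonde
variable (σ R : Type*) [CommRing R] [LinearOrder σ] [Fintype σ]

noncomputable def vandermonde : MvPolynomial σ R :=
  ∏ p : σ × σ with p.1 < p.2, (X p.1 - X p.2)

theorem isHomogeneous_vandermonde :
    (vandermonde σ R).IsHomogeneous ((Fintype.card σ).choose 2) := by
  have := IsHomogeneous.prod {p : σ × σ | p.1 < p.2} (fun p => X p.1 - X p.2)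
    (fun _ => 1) fun p _ => (isHomogeneous_X R p.1).sub (isHomogeneous_X R p.2)
  rwa [sum_const, smul_eq_mul, mul_one, ← univ_product_univ, card_product_filter_lt] at this

theorem isHomogeneous_vandermonde_fin (m : ℕ) :
    (vandermonde (Fin m) R).IsHomogeneous (m.choose 2) := by
  simpa using isHomogeneous_vandermonde (Fin m) R

variable {σ R} [IsDomain R]

theorem vandermonde_ne_zero : vandermonde σ R ≠ 0 :=
  prod_ne_zero_iff.mpr fun _ hp => (prime_X_sub_X (mem_filter.mp hp).2.ne).ne_zero

theorem vandermonde_dvd_iff [UniqueFactorizationMonoid R] (F : MvPolynomial σ R) :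
    vandermonde σ R ∣ F ↔ ∀ i j, i < j → X i - X j ∣ F := by
  constructor
  · intro h i j hij
    exact (dvd_prod_of_mem (fun p : σ × σ => (X p.1 - X p.2 : MvPolynomial σ R))
      (mem_filter.mpr ⟨mem_univ (i, j), hij⟩)).trans h
  intro h
  refine prod_dvd_of_isRelPrime (fun p hp q hq hpq => ?_)
    fun p hp => h _ _ (mem_filter.mp hp).2
  have hp' := (mem_filter.mp hp).2
  have hq' := (mem_filter.mp hq).2
  -- Distinct factors are non-associated primes: merging `p.1` into `p.2` does not kill
  -- `X q.1 - X q.2`.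
  rw [Function.onFun, (prime_X_sub_X hp'.ne).irreducible.isRelPrime_iff_not_dvd,
    X_sub_X_dvd_iff_rename_update_eq_zero hp'.ne, map_sub, rename_X, rename_X, sub_eq_zero,
    (X_injective (R := R)).eq_iff, Function.update_apply, Function.update_apply]
  obtain ⟨p1, p2⟩ := p
  obtain ⟨q1, q2⟩ := q
  grind

end Vandermonde

end MvPolynomial

namespace SRVertex
variable {m n : ℕ}

theorem card_eq_choose (k d : ℕ) : Fintype.card (SRVertex (k + 1) d) = (d + k).choose k := by
  rw [Fintype.card_congr (Sym.equivNatSumOfFintype (Fin (k + 1)) d).symm,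
    Sym.card_sym_eq_choose, Fintype.card_fin, show k + 1 + d - 1 = d + k by omega,
    Nat.choose_symm_add]

def diffSet (x y : SRVertex m n) : Finset (Fin m) := {k | x.1 k ≠ y.1 k}

theorem mem_diffSet {x y : SRVertex m n} {k : Fin m} : k ∈ diffSet x y ↔ x.1 k ≠ y.1 k := by
  simp [diffSet]

theorem diffSet_eq_empty_iff {x y : SRVertex m n} : diffSet x y = ∅ ↔ x = y := by
  simp [Finset.eq_empty_iff_forall_notMem, mem_diffSet, Subtype.ext_iff, funext_iff]

theorem SR_adj_iff {x y : SRVertex m n} : (SR m n).Adj x y ↔ #(diffSet x y) = 2 := Iff.rfl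

theorem sum_eq_of_diffSet_subset {x y : SRVertex m n} {s : Finset (Fin m)}
    (h : diffSet x y ⊆ s) : ∑ k ∈ s, x.1 k = ∑ k ∈ s, y.1 k := by
  have hx := sum_add_sum_compl s x.1
  have hy := sum_add_sum_compl s y.1
  have hc : ∑ k ∈ sᶜ, x.1 k = ∑ k ∈ sᶜ, y.1 k :=
    sum_congr rfl fun k hk => by_contra fun hne => mem_compl.mp hk (h (mem_diffSet.mpr hne))
  have := x.2
  have := y.2
  omega

theorem card_diffSet_ne_one (x y : SRVertex m n) : #(diffSet x y) ≠ 1 := by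
  intro h
  obtain ⟨k, hk⟩ := card_eq_one.mp h
  have := sum_eq_of_diffSet_subset (subset_refl (diffSet x y))
  simp only [hk, sum_singleton] at this
  exact mem_diffSet.mp (hk ▸ mem_singleton_self k) this

theorem card_filter_powersetCard_two_diffSet_subset (x y : SRVertex m n) :
    #{s ∈ powersetCard 2 univ | diffSet x y ⊆ s} =
      if x = y then m.choose 2 else if (SR m n).Adj x y then 1 else 0 := by
  split_ifs with hxy hadj
  · simp [diffSet_eq_empty_iff.mpr hxy, card_powersetCard]
  · rw [card_eq_one]
    refine ⟨diffSet x y, ext fun s => ?_⟩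
    simp only [mem_filter, mem_powersetCard, mem_singleton]
    constructor
    · rintro ⟨⟨-, hs⟩, hsub⟩
      exact (eq_of_subset_of_card_le hsub (by rw [hs, SR_adj_iff.mp hadj])).symm
    · rintro rfl
      exact ⟨⟨subset_univ _, hadj⟩, subset_rfl⟩
  · have hne0 : #(diffSet x y) ≠ 0 := by simpa [diffSet_eq_empty_iff] using hxy
    have hne1 := card_diffSet_ne_one x y
    rw [card_eq_zero, filter_eq_empty_iff]
    intro s hs hsub
    have := card_le_card hsub
    rw [(mem_powersetCard.mp hs).2] at this
    exact hadj (by rw [SR_adj_iff]; omega)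

def restrictCompl (s : Finset (Fin m)) (x : SRVertex m n) : {k // k ∉ s} → ℕ :=
  fun k => x.1 k

theorem restrictCompl_eq_iff {s : Finset (Fin m)} {x y : SRVertex m n} :
    restrictCompl s y = restrictCompl s x ↔ diffSet x y ⊆ s := by
  simp only [funext_iff, restrictCompl, Subtype.forall, subset_iff, mem_diffSet]
  exact ⟨fun h k hk => by_contra fun hks => hk (h k hks).symm,
    fun h k hks => by_contra fun hk => hks (h fun e => hk e.symm)⟩

theorem sum_powersetCard_two_sum_fiber_eq (v : SRVertex m n → ℝ) (x : SRVertex m n) :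
    ∑ s ∈ powersetCard 2 univ, ∑ y with restrictCompl s y = restrictCompl s x, v y
      = ((SR m n).adjMatrix ℝ *ᵥ v) x + m.choose 2 * v x := by
  simp_rw [restrictCompl_eq_iff, sum_filter]
  rw [sum_comm]
  simp_rw [← sum_filter, sum_const, card_filter_powersetCard_two_diffSet_subset, nsmul_eq_mul,
    mulVec, dotProduct, SimpleGraph.adjMatrix_apply]
  rw [← Fintype.sum_ite_eq x fun y => (m.choose 2 : ℝ) * v y, ← sum_add_distrib]
  refine sum_congr rfl fun y _ => ?_
  split_ifs <;> simp_all

theorem adjMatrix_mulVec_eq_neg_choose_smul_iff (v : SRVertex m n → ℝ) :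
    (SR m n).adjMatrix ℝ *ᵥ v = -(m.choose 2 : ℝ) • v ↔
      ∀ s ∈ powersetCard 2 univ, ∀ x : SRVertex m n,
        ∑ y with restrictCompl s y = restrictCompl s x, v y = 0 := by
  constructor
  · intro h
    have hx : ∀ x : SRVertex m n, ∑ s ∈ powersetCard 2 univ,
        ∑ y with restrictCompl s y = restrictCompl s x, v y = 0 := by
      intro x
      rw [sum_powersetCard_two_sum_fiber_eq, h]
      simp
    have htotal : ∑ s ∈ powersetCard 2 univ,
        ∑ x, v x * ∑ y with restrictCompl s y = restrictCompl s x, v y = 0 := by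
      rw [sum_comm]
      simp [← mul_sum, hx]
    intro s hs
    exact sum_fiber_eq_zero_of_sum_mul_sum_fiber_eq_zero
      ((sum_eq_zero_iff_of_nonneg fun s _ => sum_mul_sum_fiber_nonneg _ v).mp htotal s hs)
  · intro h
    ext x
    have := sum_powersetCard_two_sum_fiber_eq v x
    rw [sum_eq_zero fun s hs => h s hs x] at this
    simp only [Pi.smul_apply, smul_eq_mul]
    linarith

noncomputable def toFinsupp (x : SRVertex m n) : Fin m →₀ ℕ :=
  Finsupp.equivFunOnFinite.symm x.1

theorem toFinsupp_injective : Function.Injective (toFinsupp (m := m) (n := n)) :=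
  fun _ _ h => Subtype.ext (Finsupp.equivFunOnFinite.symm.injective h)

theorem range_toFinsupp : Set.range (toFinsupp (m := m) (n := n)) = {d | d.degree = n} := by
  ext d
  constructor
  · rintro ⟨x, rfl⟩
    simpa [Finsupp.degree_eq_sum, toFinsupp] using x.2
  · intro hd
    exact ⟨⟨d, by simpa [Finsupp.degree_eq_sum] using hd⟩,
      Finsupp.equivFunOnFinite.symm_apply_apply d⟩

theorem mapDomain_update_toFinsupp_eq_iff {i j : Fin m} (hij : i ≠ j) {x y : SRVertex m n} :
    y.toFinsupp.mapDomain (Function.update id i j) =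
        x.toFinsupp.mapDomain (Function.update id i j) ↔ diffSet x y ⊆ {i, j} := by
  simp only [Finsupp.mapDomain_update_id, Finsupp.ext_iff, Finsupp.add_apply, Finsupp.erase_apply,
    Finsupp.single_apply, toFinsupp, Finsupp.coe_equivFunOnFinite_symm]
  constructor
  · intro h k hk
    have := h k
    simp only [mem_insert, mem_singleton]
    by_contra hkij
    push Not at hkij
    simp [hkij.1, hkij.2.symm] at this
    exact mem_diffSet.mp hk this.symm
  · intro h k
    have hsum := sum_eq_of_diffSet_subset h
    rw [sum_pair hij, sum_pair hij] at hsum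
    have hoff : ∀ k, k ≠ i → k ≠ j → y.1 k = x.1 k := fun k hki hkj =>
      by_contra fun hne => by simpa [hki, hkj] using h (mem_diffSet.mpr (Ne.symm hne))
    by_cases hki : k = i
    · simp [hki, hij.symm]
    by_cases hkj : k = j
    · subst hkj
      simp [hki]
      omega
    · simp [hki, Ne.symm hkj, hoff k hki hkj]

variable (R : Type*) [CommSemiring R]

noncomputable def toMvPolynomial : (SRVertex m n → R) →ₗ[R] MvPolynomial (Fin m) R :=
  Fintype.linearCombination R fun x => MvPolynomial.monomial x.toFinsupp 1

theorem toMvPolynomial_apply (v : SRVertex m n → R) :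
    toMvPolynomial R v = ∑ x, MvPolynomial.monomial x.toFinsupp (v x) := by
  simp_rw [toMvPolynomial, Fintype.linearCombination_apply, MvPolynomial.smul_monomial,
    smul_eq_mul, mul_one]

theorem toMvPolynomial_injective : Function.Injective (toMvPolynomial (m := m) (n := n) R) :=
  linearIndependent_iff_injective_fintypeLinearCombination.mp
    ((basisMonomials (Fin m) R).linearIndependent.comp _ toFinsupp_injective)

theorem range_toMvPolynomial :
    LinearMap.range (toMvPolynomial (m := m) (n := n) R) = homogeneousSubmodule (Fin m) R n := by
  rw [toMvPolynomial, Fintype.range_linearCombination, homogeneousSubmodule_eq_finsupp_supported,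
    AddMonoidAlgebra.supported_eq_span_single, ← range_toFinsupp, ← Set.range_comp]
  rfl

variable {R}

theorem isHomogeneous_toMvPolynomial (v : SRVertex m n → R) :
    (toMvPolynomial R v).IsHomogeneous n := by
  rw [← mem_homogeneousSubmodule, ← range_toMvPolynomial]
  exact LinearMap.mem_range_self _ v

theorem rename_update_toMvPolynomial_eq_zero_iff {i j : Fin m} (hij : i ≠ j)
    (v : SRVertex m n → ℝ) :
    rename (Function.update id i j) (toMvPolynomial ℝ v) = 0 ↔
      ∀ x : SRVertex m n,
        ∑ y with restrictCompl {i, j} y = restrictCompl {i, j} x, v y = 0 := by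
  simp_rw [toMvPolynomial_apply, map_sum, rename_monomial, sum_monomial_eq_zero_iff,
    mapDomain_update_toFinsupp_eq_iff hij, restrictCompl_eq_iff]

theorem mem_eigenspace_iff_vandermonde_dvd (v : SRVertex m n → ℝ) :
    v ∈ Module.End.eigenspace (toLin' ((SR m n).adjMatrix ℝ)) (-(m.choose 2 : ℝ)) ↔
      vandermonde (Fin m) ℝ ∣ toMvPolynomial ℝ v := by
  rw [Module.End.mem_eigenspace_iff, toLin'_apply, adjMatrix_mulVec_eq_neg_choose_smul_iff,
    Finset.forall_mem_powersetCard_two_iff, vandermonde_dvd_iff]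
  refine forall₂_congr fun i j => forall_congr' fun hij => ?_
  rw [X_sub_X_dvd_iff_rename_update_eq_zero hij.ne,
    rename_update_toMvPolynomial_eq_zero_iff hij.ne]

theorem map_eigenspace_toMvPolynomial (hC : m.choose 2 ≤ n) :
    (Module.End.eigenspace (toLin' ((SR m n).adjMatrix ℝ)) (-(m.choose 2 : ℝ))).map
        (toMvPolynomial ℝ) =
      LinearMap.range (LinearMap.mulLeft ℝ (vandermonde (Fin m) ℝ) ∘ₗ
        toMvPolynomial (n := n - m.choose 2) ℝ) := by
  have hV := isHomogeneous_vandermonde_fin ℝ m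
  ext F
  simp only [Submodule.mem_map, LinearMap.mem_range, LinearMap.comp_apply,
    LinearMap.mulLeft_apply, mem_eigenspace_iff_vandermonde_dvd]
  constructor
  · rintro ⟨v, ⟨G, hG⟩, rfl⟩
    have hG' := hV.eq_mul_homogeneousComponent (isHomogeneous_toMvPolynomial v) hC hG
    obtain ⟨w, hw⟩ : homogeneousComponent (n - m.choose 2) G ∈
        LinearMap.range (toMvPolynomial ℝ) := by
      rw [range_toMvPolynomial]
      exact homogeneousComponent_mem _ G
    rw [← hw] at hG'
    exact ⟨w, hG'.symm⟩
  · rintro ⟨w, rfl⟩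
    obtain ⟨v, hv⟩ : vandermonde (Fin m) ℝ * toMvPolynomial ℝ w ∈
        LinearMap.range (toMvPolynomial (n := n) ℝ) := by
      have := hV.mul (isHomogeneous_toMvPolynomial w)
      rwa [Nat.add_sub_cancel' hC, ← mem_homogeneousSubmodule, ← range_toMvPolynomial] at this
    exact ⟨v, hv ▸ dvd_mul_right _ _, hv⟩

theorem finrank_eigenspace_of_le (hC : m.choose 2 ≤ n) :
    Module.finrank ℝ
        (Module.End.eigenspace (toLin' ((SR m n).adjMatrix ℝ)) (-(m.choose 2 : ℝ)))
      = Fintype.card (SRVertex m (n - m.choose 2)) := by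
  rw [(Submodule.equivMapOfInjective _ (toMvPolynomial_injective ℝ) _).finrank_eq,
    map_eigenspace_toMvPolynomial hC, LinearMap.finrank_range_of_inj,
    Module.finrank_fintype_fun_eq_card]
  exact (mul_right_injective₀ vandermonde_ne_zero).comp (toMvPolynomial_injective ℝ)

theorem eigenspace_eq_bot_of_lt (hC : n < m.choose 2) :
    Module.End.eigenspace (toLin' ((SR m n).adjMatrix ℝ)) (-(m.choose 2 : ℝ)) = ⊥ := by
  refine (Submodule.eq_bot_iff _).mpr fun v hv => toMvPolynomial_injective ℝ ?_
  rw [map_zero]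
  exact (isHomogeneous_vandermonde_fin ℝ m).eq_zero_of_dvd_of_lt
    (isHomogeneous_toMvPolynomial v) ((mem_eigenspace_iff_vandermonde_dvd v).mp hv) hC

end SRVertex

/-- The multiplicity of the eigenvalue `-choose m 2` of the adjacency matrix of `SR(m,n)`
equals `choose (n - choose (m-1) 2) (m-1)` (which is `0` when `n < choose (m-1) 2`,
by truncated natural subtraction). -/
theorem SR_mult_smallest (m n : ℕ) (hm : 1 ≤ m) :
    Module.finrank ℝ
        (Module.End.eigenspace (Matrix.toLin' ((SR m n).adjMatrix ℝ))
          (-(Nat.choose m 2 : ℝ)))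
      = Nat.choose (n - Nat.choose (m - 1) 2) (m - 1) := by
  obtain ⟨k, rfl⟩ : ∃ k, m = k + 1 := ⟨m - 1, by omega⟩
  have hchoose : (k + 1).choose 2 = k.choose 2 + k := by
    rw [Nat.choose_succ_succ', Nat.choose_one_right, add_comm]
  rw [Nat.add_sub_cancel]
  by_cases hC : (k + 1).choose 2 ≤ n
  · rw [SRVertex.finrank_eigenspace_of_le hC, SRVertex.card_eq_choose]
    congr 1
    omega
  · have hk : k ≠ 0 := by
      rintro rfl
      simp at hC
    rw [SRVertex.eigenspace_eq_bot_of_lt (not_le.mp hC), finrank_bot, Nat.choose_eq_zero_of_lt]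
    omega
end

section
/- Let n ≥ 1 and let x be a vertex of SR(m,n) with exactly i nonzero coordinates (so 1 ≤ i ≤ min(m,n)). Then: (a) the number of neighbors of x having exactly i−1 nonzero coordinates equals i(i−1); (b) the number of neighbors of x having exactly i+1 nonzero coordinates equals (n−i)(m−i); (c) every other neighbor of x has exactly i nonzero coordinates. Moreover, the number of vertices of SR(m,n) with exactly i nonzero coordinates equals C(m,i)·C(n−1,i−1). -/
/-!
Every neighbour of `x` arises from exactly one triple `(a, b, v)` with `a ≠ b` and `v < x a`:
keep `v` at `a` and move the rest of `x a` to `b`. Such a move loses a nonzero coordinate iff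
`v = 0` and creates one iff `x b = 0`. Hence the neighbours with `i - 1` nonzero coordinates
correspond to ordered pairs of distinct support points, and those with `i + 1` to a choice of
`a`, of `0 < v < x a` (`∑ₐ (x a - 1) = n - i` choices in all) and of `b` outside the support.
Vertices with a fixed support of size `i` are compositions of `n` into `i` positive parts,
counted by stars and bars as `C(n - 1, i - 1)`.
-/

open Matrix Polynomial

open Finset Function

section Support

variable {ι : Type*} [Fintype ι]

theorem sum_add_eq_sum_add_of_eq_off_pair [DecidableEq ι] {M : Type*} [AddCommMonoid M]
    {f g : ι → M} {a b : ι} (hab : a ≠ b) (h : ∀ j, j ≠ a → j ≠ b → f j = g j) :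
    ∑ j, f j + (g a + g b) = ∑ j, g j + (f a + f b) := by
  have hcompl : ∑ j ∈ {a, b}ᶜ, f j = ∑ j ∈ {a, b}ᶜ, g j := sum_congr rfl fun j hj => by
    simp only [mem_compl, mem_insert, mem_singleton, not_or] at hj
    exact h j hj.1 hj.2
  rw [← sum_add_sum_compl {a, b} f, ← sum_add_sum_compl {a, b} g, sum_pair hab, sum_pair hab,
    hcompl]
  abel

theorem sum_sub_one_add_card_support (x : ι → ℕ) :
    ∑ j, (x j - 1) + #{j | x j ≠ 0} = ∑ j, x j := by
  rw [card_filter, ← sum_add_distrib]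
  exact sum_congr rfl fun j _ => by split_ifs <;> omega

theorem card_support_le_sum (x : ι → ℕ) : #{j | x j ≠ 0} ≤ ∑ j, x j := by
  have := sum_sub_one_add_card_support x
  omega

end Support

section Transfer

variable {ι : Type*} [DecidableEq ι]

/-- Keep `v` units at `a` and move the rest of `x a` to `b`. -/
def transfer (x : ι → ℕ) (a b : ι) (v : ℕ) : ι → ℕ :=
  update (update x a v) b (x a + x b - v)

variable {x : ι → ℕ} {a b j : ι} {v : ℕ}

theorem transfer_apply_left (hab : a ≠ b) : transfer x a b v a = v := by
  simp [transfer, update_of_ne hab]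

theorem transfer_apply_right : transfer x a b v b = x a + x b - v := by
  simp [transfer]

theorem transfer_apply_of_ne (hja : j ≠ a) (hjb : j ≠ b) : transfer x a b v j = x j := by
  simp [transfer, update_of_ne hja, update_of_ne hjb]

theorem transfer_lt_iff (hab : a ≠ b) (hv : v < x a) : transfer x a b v j < x j ↔ j = a := by
  rcases eq_or_ne j a with rfl | hja
  · simp [transfer_apply_left hab, hv]
  rcases eq_or_ne j b with rfl | hjb
  · simp only [transfer_apply_right, hja, iff_false, not_lt]; omega
  · simp [transfer_apply_of_ne hja hjb, hja]

theorem lt_transfer_iff (hab : a ≠ b) (hv : v < x a) : x j < transfer x a b v j ↔ j = b := by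
  rcases eq_or_ne j b with rfl | hjb
  · simp only [transfer_apply_right, iff_true]; omega
  rcases eq_or_ne j a with rfl | hja
  · simp only [transfer_apply_left hab, hjb, iff_false, not_lt]; omega
  · simp [transfer_apply_of_ne hja hjb, hjb]

theorem transfer_eq_of_eq_off_pair {y : ι → ℕ} (hab : a ≠ b)
    (hoff : ∀ j, j ≠ a → j ≠ b → y j = x j) (hsum : x a + x b = y a + y b) :
    transfer x a b (y a) = y := by
  funext j
  rcases eq_or_ne j a with rfl | hja
  · exact transfer_apply_left hab
  rcases eq_or_ne j b with rfl | hjb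
  · rw [transfer_apply_right]; omega
  · rw [transfer_apply_of_ne hja hjb, hoff j hja hjb]

theorem filter_ne_transfer [Fintype ι] (hab : a ≠ b) (hv : v < x a) :
    ({j | x j ≠ transfer x a b v j} : Finset ι) = {a, b} := by
  ext j
  simp only [mem_filter, mem_univ, true_and, mem_insert, mem_singleton]
  refine ⟨fun h => ?_, ?_⟩
  · by_contra! hj
    exact h (transfer_apply_of_ne hj.1 hj.2).symm
  · rintro (rfl | rfl)
    · rw [transfer_apply_left hab]; omega
    · rw [transfer_apply_right]; omega

variable [Fintype ι]

theorem sum_transfer (hab : a ≠ b) (hv : v ≤ x a) : ∑ j, transfer x a b v j = ∑ j, x j := by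
  have := sum_add_eq_sum_add_of_eq_off_pair hab fun j (hja : j ≠ a) hjb =>
    transfer_apply_of_ne (x := x) (v := v) hja hjb
  rw [transfer_apply_left hab, transfer_apply_right] at this
  omega

theorem card_support_transfer (hab : a ≠ b) (hv : v < x a) :
    #{j | transfer x a b v j ≠ 0} + (if v = 0 then 1 else 0)
      = #{j | x j ≠ 0} + (if x b = 0 then 1 else 0) := by
  have := sum_add_eq_sum_add_of_eq_off_pair (M := ℕ)
    (f := fun j => if transfer x a b v j ≠ 0 then 1 else 0)
    (g := fun j => if x j ≠ 0 then 1 else 0) hab fun j hja hjb => by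
      simp only [transfer_apply_of_ne hja hjb]
  simp only [← card_filter, transfer_apply_left hab, transfer_apply_right] at this
  split_ifs at this ⊢ <;> omega

theorem card_support_transfer_eq_sub_one_iff (hab : a ≠ b) (hv : v < x a) :
    #{j | transfer x a b v j ≠ 0} = #{j | x j ≠ 0} - 1 ↔ v = 0 ∧ x b ≠ 0 := by
  have hx : 0 < #{j | x j ≠ 0} := card_pos.2 ⟨a, mem_filter.2 ⟨mem_univ a, by omega⟩⟩
  have := card_support_transfer hab hv
  split_ifs at this <;> omega

theorem card_support_transfer_eq_add_one_iff (hab : a ≠ b) (hv : v < x a) :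
    #{j | transfer x a b v j ≠ 0} = #{j | x j ≠ 0} + 1 ↔ v ≠ 0 ∧ x b = 0 := by
  have := card_support_transfer hab hv
  split_ifs at this <;> omega

end Transfer

section Params

variable {ι : Type*} [Fintype ι]

def transferParams (x : ι → ℕ) : Finset (Σ _ : ι × ι, ℕ) :=
  univ.offDiag.sigma fun p => range (x p.1)

theorem mem_transferParams {x : ι → ℕ} {p : Σ _ : ι × ι, ℕ} :
    p ∈ transferParams x ↔ p.1.1 ≠ p.1.2 ∧ p.2 < x p.1.1 := by
  simp [transferParams]

theorem card_filter_transferParams_eq_zero (x : ι → ℕ) :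
    #{p ∈ transferParams x | p.2 = 0 ∧ x p.1.2 ≠ 0}
      = #{j | x j ≠ 0} * (#{j | x j ≠ 0} - 1) := by
  have : {p ∈ transferParams x | p.2 = 0 ∧ x p.1.2 ≠ 0}
      = ({j | x j ≠ 0} : Finset ι).offDiag.sigma fun _ => {0} := by
    ext ⟨⟨a, b⟩, v⟩
    simp only [mem_filter, mem_transferParams, mem_sigma, mem_offDiag, mem_univ, true_and,
      mem_singleton]
    constructor
    · rintro ⟨⟨hab, hv⟩, rfl, hb⟩
      exact ⟨⟨by omega, hb, hab⟩, rfl⟩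
    · rintro ⟨⟨ha, hb, hab⟩, rfl⟩
      exact ⟨⟨hab, by omega⟩, rfl, hb⟩
  rw [this, card_sigma]
  simp only [card_singleton, sum_const, smul_eq_mul, mul_one, offDiag_card, Nat.mul_sub_one]

theorem card_filter_transferParams_ne_zero (x : ι → ℕ) :
    #{p ∈ transferParams x | p.2 ≠ 0 ∧ x p.1.2 = 0}
      = (∑ j, x j - #{j | x j ≠ 0}) * (Fintype.card ι - #{j | x j ≠ 0}) := by
  have : {p ∈ transferParams x | p.2 ≠ 0 ∧ x p.1.2 = 0}
      = ((univ : Finset ι) ×ˢ ({j | x j = 0} : Finset ι)).sigma fun q => Ioo 0 (x q.1) := by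
    ext ⟨⟨a, b⟩, v⟩
    simp only [mem_filter, mem_transferParams, mem_sigma, mem_product, mem_univ, true_and,
      mem_Ioo]
    constructor
    · rintro ⟨⟨-, hv⟩, hv0, hb⟩
      exact ⟨hb, by omega, hv⟩
    · rintro ⟨hb, hv0, hv⟩
      exact ⟨⟨fun hab => by subst hab; omega, hv⟩, by omega, hb⟩
  rw [this, card_sigma, sum_product]
  simp only [Nat.card_Ioo, Nat.sub_zero, sum_const, smul_eq_mul, ← mul_sum]
  have hzero := card_filter_add_card_filter_not (s := univ) fun j => x j ≠ 0
  simp only [not_not, card_univ] at hzero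
  rw [mul_comm, ← Nat.eq_sub_of_add_eq (sum_sub_one_add_card_support x),
    ← Nat.eq_sub_of_add_eq' hzero]

variable [DecidableEq ι]

theorem injOn_transfer (x : ι → ℕ) :
    Set.InjOn (fun p : Σ _ : ι × ι, ℕ => transfer x p.1.1 p.1.2 p.2) (transferParams x) := by
  rintro ⟨⟨a, b⟩, v⟩ hp ⟨⟨a', b'⟩, v'⟩ hp'
    (h : transfer x a b v = transfer x a' b' v')
  obtain ⟨hab, hv⟩ := mem_transferParams.1 hp
  obtain ⟨hab', hv'⟩ := mem_transferParams.1 hp'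
  have ha : a = a' := (transfer_lt_iff hab' hv').1 (h ▸ (transfer_lt_iff hab hv).2 rfl)
  have hb : b = b' := (lt_transfer_iff hab' hv').1 (h ▸ (lt_transfer_iff hab hv).2 rfl)
  subst ha hb
  have hv : v = v' := by simpa [transfer_apply_left hab] using congrFun h a
  rw [hv]

theorem exists_transfer_of_card_ne_eq_two {x y : ι → ℕ} (hxy : #{j | x j ≠ y j} = 2)
    (hsum : ∑ j, y j = ∑ j, x j) :
    ∃ p ∈ transferParams x, transfer x p.1.1 p.1.2 p.2 = y := by
  obtain ⟨a, b, hab, hD⟩ := card_eq_two.1 hxy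
  have hoff : ∀ j, j ≠ a → j ≠ b → y j = x j := fun j hja hjb => by
    by_contra h
    have : j ∈ ({j | x j ≠ y j} : Finset ι) := by simp [Ne.symm h]
    simp [hD, hja, hjb] at this
  have hxa : x a ≠ y a := by simpa using hD.ge (mem_insert_self a {b})
  have hpair : x a + x b = y a + y b := by
    have := sum_add_eq_sum_add_of_eq_off_pair hab hoff
    omega
  rcases lt_or_gt_of_ne hxa with hlt | hlt
  · exact ⟨⟨(b, a), y b⟩, mem_transferParams.2 ⟨hab.symm, show y b < x b by omega⟩,
      transfer_eq_of_eq_off_pair hab.symm (fun j hjb hja => hoff j hja hjb)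
        (show x b + x a = y b + y a by omega)⟩
  · exact ⟨⟨(a, b), y a⟩, mem_transferParams.2 ⟨hab, hlt⟩,
      transfer_eq_of_eq_off_pair hab hoff hpair⟩

end Params

section StarsAndBars

variable {ι : Type*} [Fintype ι] [DecidableEq ι]

theorem Nat.card_fun_sum_eq_choose (α : Type*) [Fintype α] [DecidableEq α] (k : ℕ) :
    Nat.card {f : α → ℕ // ∑ a, f a = k} = (Fintype.card α + k - 1).choose k := by
  rw [← Nat.card_congr (Sym.equivNatSumOfFintype α k), Nat.card_eq_fintype_card,
    Sym.card_sym_eq_choose]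

/-- Subtracting `1` on the support. -/
def supportEqEquiv (n : ℕ) (S : Finset ι) (hS : #S ≤ n) :
    {y : {x : ι → ℕ // ∑ j, x j = n} // ({j | y.1 j ≠ 0} : Finset ι) = S}
      ≃ {f : S → ℕ // ∑ a, f a = n - #S} where
  toFun y := ⟨fun a => y.1.1 a - 1, by
    obtain ⟨⟨y, hyn⟩, hyS : ({j | y j ≠ 0} : Finset ι) = S⟩ := y
    have hzero : ∀ j ∉ S, y j = 0 := fun j hj => by simpa [← hyS] using hj
    have := sum_sub_one_add_card_support y
    rw [hyS, hyn, ← sum_subset (subset_univ S) fun j _ hj => by simp [hzero j hj]] at this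
    change ∑ a : S, (y a - 1) = n - #S
    rw [sum_coe_sort S fun j => y j - 1]
    omega⟩
  invFun f := ⟨⟨fun j => if h : j ∈ S then f.1 ⟨j, h⟩ + 1 else 0, by
      rw [← sum_attach_eq_sum_dite S fun a => f.1 a + 1, ← univ_eq_attach, sum_add_distrib, f.2]
      simp only [sum_const, card_univ, Fintype.card_coe, smul_eq_mul, mul_one]
      omega⟩, by
    ext j
    by_cases hj : j ∈ S <;> simp [hj]⟩
  left_inv y := by
    obtain ⟨⟨y, hyn⟩, hyS : ({j | y j ≠ 0} : Finset ι) = S⟩ := y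
    ext j
    by_cases hj : j ∈ S
    · have : y j ≠ 0 := by simpa [← hyS] using hj
      simp only [dif_pos hj]
      omega
    · have : y j = 0 := by simpa [← hyS] using hj
      simp [dif_neg hj, this]
  right_inv f := by
    ext a
    simp

theorem Nat.card_fun_support_eq_choose (n : ℕ) (S : Finset ι) (hS : #S ≤ n) :
    Nat.card {y : {x : ι → ℕ // ∑ j, x j = n} // ({j | y.1 j ≠ 0} : Finset ι) = S}
      = (n - 1).choose (n - #S) := by
  rw [Nat.card_congr (supportEqEquiv n S hS), Nat.card_fun_sum_eq_choose, Fintype.card_coe]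
  congr 1
  omega

end StarsAndBars

namespace SR

variable {m n : ℕ}

theorem map_neighborFinset (x : SRVertex m n) :
    ((SR m n).neighborFinset x).map (Embedding.subtype _)
      = (transferParams x.1).image fun p => transfer x.1 p.1.1 p.1.2 p.2 := by
  ext y
  simp only [mem_map, mem_image, SimpleGraph.mem_neighborFinset, Embedding.coe_subtype]
  constructor
  · rintro ⟨y, hy, rfl⟩
    exact exists_transfer_of_card_ne_eq_two hy (y.2.trans x.2.symm)
  · rintro ⟨p, hp, rfl⟩
    obtain ⟨hab, hv⟩ := mem_transferParams.1 hp
    refine ⟨⟨_, (sum_transfer hab hv.le).trans x.2⟩, ?_, rfl⟩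
    change #{j | x.1 j ≠ transfer x.1 p.1.1 p.1.2 p.2 j} = 2
    rw [filter_ne_transfer hab hv, card_pair hab]

theorem card_filter_neighborFinset (x : SRVertex m n) (P : (Fin m → ℕ) → Prop)
    [DecidablePred P] :
    #{y ∈ (SR m n).neighborFinset x | P y.1}
      = #{p ∈ transferParams x.1 | P (transfer x.1 p.1.1 p.1.2 p.2)} := by
  calc #{y ∈ (SR m n).neighborFinset x | P y.1}
      = #(({y ∈ (SR m n).neighborFinset x | P y.1}).map (Embedding.subtype _)) :=
        (card_map _).symm
    _ = #{y ∈ ((SR m n).neighborFinset x).map (Embedding.subtype _) | P y} := by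
        rw [filter_map]; rfl
    _ = _ := by
        rw [map_neighborFinset, filter_image,
          card_image_of_injOn ((injOn_transfer x.1).mono (filter_subset _ _))]

theorem card_filter_neighborFinset_card_support_eq_sub_one (x : SRVertex m n) :
    #{y ∈ (SR m n).neighborFinset x | #{j | y.1 j ≠ 0} = #{j | x.1 j ≠ 0} - 1}
      = #{j | x.1 j ≠ 0} * (#{j | x.1 j ≠ 0} - 1) := by
  rw [card_filter_neighborFinset x fun f => #{j | f j ≠ 0} = #{j | x.1 j ≠ 0} - 1,
    filter_congr fun p hp => card_support_transfer_eq_sub_one_iff (mem_transferParams.1 hp).1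
      (mem_transferParams.1 hp).2, card_filter_transferParams_eq_zero]

theorem card_filter_neighborFinset_card_support_eq_add_one (x : SRVertex m n) :
    #{y ∈ (SR m n).neighborFinset x | #{j | y.1 j ≠ 0} = #{j | x.1 j ≠ 0} + 1}
      = (n - #{j | x.1 j ≠ 0}) * (m - #{j | x.1 j ≠ 0}) := by
  rw [card_filter_neighborFinset x fun f => #{j | f j ≠ 0} = #{j | x.1 j ≠ 0} + 1,
    filter_congr fun p hp => card_support_transfer_eq_add_one_iff (mem_transferParams.1 hp).1
      (mem_transferParams.1 hp).2, card_filter_transferParams_ne_zero, x.2, Fintype.card_fin]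

theorem card_support_of_adj {x y : SRVertex m n} (h : (SR m n).Adj x y) :
    #{j | y.1 j ≠ 0} + 1 = #{j | x.1 j ≠ 0} ∨ #{j | y.1 j ≠ 0} = #{j | x.1 j ≠ 0}
      ∨ #{j | y.1 j ≠ 0} = #{j | x.1 j ≠ 0} + 1 := by
  have hy : y.1 ∈ ((SR m n).neighborFinset x).map (Embedding.subtype _) :=
    mem_map_of_mem _ ((SR m n).mem_neighborFinset x y |>.2 h)
  rw [map_neighborFinset, mem_image] at hy
  obtain ⟨p, hp, hpy⟩ := hy
  obtain ⟨hab, hv⟩ := mem_transferParams.1 hp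
  have := card_support_transfer hab hv
  rw [hpy] at this
  split_ifs at this <;> omega

theorem card_filter_card_support_eq {i : ℕ} (hi : 0 < i) (hin : i ≤ n) :
    #{y : SRVertex m n | #{j | y.1 j ≠ 0} = i} = m.choose i * (n - 1).choose (i - 1) := by
  have hfiber : ∀ S ∈ (univ : Finset (Fin m)).powersetCard i,
      #{y ∈ {y : SRVertex m n | #{j | y.1 j ≠ 0} = i} |
        ({j | y.1 j ≠ 0} : Finset (Fin m)) = S}
        = (n - 1).choose (i - 1) := by
    intro S hS
    obtain ⟨-, hSi⟩ := mem_powersetCard.1 hS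
    rw [filter_filter, filter_congr fun y _ => and_iff_right_of_imp fun hy => hy ▸ hSi,
      ← Fintype.card_subtype, ← Nat.card_eq_fintype_card, Nat.card_fun_support_eq_choose n S (hSi ▸ hin), hSi]
    exact Nat.choose_symm_of_eq_add (by omega)
  rw [card_eq_sum_card_fiberwise fun y hy =>
      mem_powersetCard.2 ⟨subset_univ _, (mem_filter.1 hy).2⟩,
    sum_congr rfl hfiber, sum_const, card_powersetCard, card_univ, Fintype.card_fin, smul_eq_mul]

end SR

/-- The partition of the vertices of `SR(m,n)` by number of nonzero coordinates is
equitable: a vertex `x` with exactly `i` nonzero coordinates has `i(i-1)` neighbors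
with `i-1` nonzero coordinates, `(n-i)(m-i)` neighbors with `i+1` nonzero coordinates,
and all other neighbors have exactly `i` nonzero coordinates; moreover the number of
vertices with exactly `i` nonzero coordinates is `choose m i * choose (n-1) (i-1)`. -/
theorem SR_equitable_partition (m n : ℕ) (hn : 1 ≤ n) (i : ℕ) (x : SRVertex m n)
    (hx : (Finset.univ.filter fun j => x.1 j ≠ 0).card = i) :
    (((SR m n).neighborFinset x).filter (fun y =>
        (Finset.univ.filter fun j => y.1 j ≠ 0).card = i - 1)).card = i * (i - 1) ∧
    (((SR m n).neighborFinset x).filter (fun y =>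
        (Finset.univ.filter fun j => y.1 j ≠ 0).card = i + 1)).card = (n - i) * (m - i) ∧
    (∀ y ∈ (SR m n).neighborFinset x,
        (Finset.univ.filter fun j => y.1 j ≠ 0).card ≠ i - 1 →
        (Finset.univ.filter fun j => y.1 j ≠ 0).card ≠ i + 1 →
        (Finset.univ.filter fun j => y.1 j ≠ 0).card = i) ∧
    (Finset.univ.filter fun y : SRVertex m n =>
        (Finset.univ.filter fun j => y.1 j ≠ 0).card = i).card
      = Nat.choose m i * Nat.choose (n - 1) (i - 1) := by
  subst hx
  obtain ⟨j, hj⟩ : ∃ j, x.1 j ≠ 0 := by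
    by_contra! h
    have := x.2
    simp only [h, sum_const_zero] at this
    omega
  have hpos : 0 < #{j | x.1 j ≠ 0} := card_pos.2 ⟨j, mem_filter.2 ⟨mem_univ j, hj⟩⟩
  refine ⟨SR.card_filter_neighborFinset_card_support_eq_sub_one x,
    SR.card_filter_neighborFinset_card_support_eq_add_one x, fun y hy hpred hsucc => ?_,
    SR.card_filter_card_support_eq hpos ((card_support_le_sum x.1).trans_eq x.2)⟩
  have := SR.card_support_of_adj ((SR m n).mem_neighborFinset x y |>.1 hy)
  omega
end

section
/- Let m, n ≥ 1. For every i with 0 ≤ i ≤ min(m,n)−1, the eigenspace {v | A v = ((n−i)(m−i)−n)·v} of the adjacency matrix A of SR(m,n) has dimension at least C(m,i). Moreover, if n < m, then the eigenspace {v | A v = −n·v} has dimension at least C(m,n) − 1. -/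
open Matrix Polynomial

/-!
Let `posVec T` be the indicator of the vertices that are positive on `T ⊆ Fin m`. Sorting the
neighbours of a vertex by the move that produces them gives
`A *ᵥ posVec T = λ_|T| • posVec T + (n - |T| + 1) • ∑ a ∈ T, posVec (T \ {a})` with
`λ_t = (n - t)(m - t) - n`. So `A` is triangular on these indicators, and since
`λ_s ≠ λ_t` for `s < t ≤ n`, `t < m`, each `posVec T` with `|T| = t` completes to a
`λ_t`-eigenvector `eigvec T` by lower-order terms `posVec S`, `S ⊂ T`. Evaluating at vertices
with support exactly `S` shows that every linear relation among the `posVec S`, `|S| ≤ n`, has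
coefficients `(-1)^|S|` times a constant; comparing the coefficients in degrees `t` and `t + 1`,
the `eigvec T` are independent for `t < n`, and for `t = n` their relations form a space of
dimension at most one.
-/

open Finset

lemma Finset.sum_powerset_sum_erase {α M : Type*} [DecidableEq α] [AddCommMonoid M]
    (T : Finset α) (f : Finset α → M) :
    ∑ S ∈ T.powerset, ∑ a ∈ S, f (S.erase a) = ∑ U ∈ T.powerset, (#T - #U) • f U := by
  have hsdiff : ∀ U ∈ T.powerset, (#T - #U) • f U = ∑ _b ∈ T \ U, f U := fun U hU => by
    rw [sum_const, card_sdiff_of_subset (mem_powerset.mp hU)]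
  rw [sum_congr rfl hsdiff, sum_sigma', sum_sigma']
  refine sum_nbij' (fun p => ⟨p.1.erase p.2, p.2⟩) (fun p => ⟨insert p.2 p.1, p.2⟩)
    ?_ ?_ ?_ ?_ ?_
  · rintro ⟨S, a⟩ h
    simp only [mem_sigma, mem_powerset] at h ⊢
    exact ⟨(erase_subset a S).trans h.1, by simp [h.1 h.2]⟩
  · rintro ⟨U, b⟩ h
    simp only [mem_sigma, mem_powerset, mem_sdiff] at h ⊢
    exact ⟨insert_subset h.2.1 h.1, mem_insert_self b U⟩
  · rintro ⟨S, a⟩ h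
    simp only [mem_sigma] at h
    simp [insert_erase h.2]
  · rintro ⟨U, b⟩ h
    simp only [mem_sigma, mem_sdiff] at h
    simp [erase_insert h.2.2]
  · intro p _
    rfl

lemma Finset.eq_zero_of_sum_powerset_eq_zero {α M : Type*} [DecidableEq α] [AddCommMonoid M]
    {f : Finset α → M} {n : ℕ}
    (h : ∀ S : Finset α, #S ≤ n → ∑ U ∈ S.powerset, f U = 0)
    (S : Finset α) (hS : #S ≤ n) : f S = 0 := by
  induction S using Finset.strongInduction with
  | H S ih =>
    have hsum := h S hS
    rwa [← add_sum_erase _ _ (mem_powerset_self S), sum_eq_zero, add_zero] at hsum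
    intro U hU
    have hUS : U ⊂ S := ssubset_iff_subset_ne.mpr
      ⟨mem_powerset.mp (mem_of_mem_erase hU), ne_of_mem_erase hU⟩
    exact ih U hUS ((card_le_card hUS.subset).trans hS)

namespace SR

variable {m n : ℕ}

def move (x : Fin m → ℕ) (k l : Fin m) (c : ℕ) : Fin m → ℕ :=
  fun j => if j = l then x l - c else if j = k then x k + c else x j

section move

variable {x : Fin m → ℕ} {k l : Fin m} {c : ℕ}

lemma move_add_ite (hkl : k ≠ l) (hc : c ≤ x l) (j : Fin m) :
    move x k l c j + (if j = l then c else 0) = x j + if j = k then c else 0 := by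
  unfold move
  split_ifs <;> subst_vars <;> omega

lemma sum_move (hkl : k ≠ l) (hc : c ≤ x l) : ∑ j, move x k l c j = ∑ j, x j := by
  have h := sum_congr rfl fun j (_ : j ∈ univ) => move_add_ite hkl hc j
  simpa [sum_add_distrib] using h

lemma move_lt_iff (hkl : k ≠ l) (hc : 0 < c) (hcl : c ≤ x l) {j : Fin m} :
    move x k l c j < x j ↔ j = l := by
  unfold move
  split_ifs <;> subst_vars <;> omega

lemma lt_move_iff (hkl : k ≠ l) (hc : 0 < c) {j : Fin m} :
    x j < move x k l c j ↔ j = k := by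
  unfold move
  split_ifs <;> subst_vars <;> omega

lemma move_ne_iff (hkl : k ≠ l) (hc : 0 < c) (hcl : c ≤ x l) {j : Fin m} :
    x j ≠ move x k l c j ↔ j = k ∨ j = l := by
  rw [ne_iff_lt_or_gt, lt_move_iff hkl hc, move_lt_iff hkl hc hcl]

lemma move_inj {k' l' : Fin m} {c' : ℕ} (hkl : k ≠ l) (hc : 0 < c) (hcl : c ≤ x l)
    (hkl' : k' ≠ l') (hc' : 0 < c') (hcl' : c' ≤ x l')
    (h : move x k l c = move x k' l' c') : k = k' ∧ l = l' ∧ c = c' := by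
  have hl : l = l' := (move_lt_iff hkl' hc' hcl').mp (h ▸ (move_lt_iff hkl hc hcl).mpr rfl)
  have hk : k = k' := (lt_move_iff hkl' hc').mp (h ▸ (lt_move_iff hkl hc).mpr rfl)
  subst hl hk
  have := congrFun h k
  simp only [move, if_neg hkl, if_true] at this
  exact ⟨rfl, rfl, by omega⟩

end move

lemma move_eq_of_lt {x y : Fin m → ℕ} {a b : Fin m}
    (hrest : ∀ j, j ≠ a → j ≠ b → x j = y j) (hsum : x a + x b = y a + y b)
    (hlt : x a < y a) : move x a b (y a - x a) = y := by
  funext j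
  unfold move
  split_ifs with hjb hja
  · subst hjb; omega
  · subst hja; omega
  · exact hrest j hja hjb

lemma exists_move_of_adj {x y : SRVertex m n} (h : (SR m n).Adj x y) :
    ∃ k l c, k ≠ l ∧ 0 < c ∧ c ≤ x.1 l ∧ move x.1 k l c = y.1 := by
  obtain ⟨a, b, hab, hdiff⟩ := card_eq_two.mp h
  have hmem : ∀ j, x.1 j ≠ y.1 j ↔ j = a ∨ j = b := by
    simpa [Finset.ext_iff] using hdiff
  have hrest : ∀ j, j ≠ a → j ≠ b → x.1 j = y.1 j := fun j hja hjb => by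
    by_contra hne
    exact (hmem j).mp hne |>.elim hja hjb
  have hsum : x.1 a + x.1 b = y.1 a + y.1 b := by
    have hx := sum_add_sum_compl {a, b} x.1
    have hy := sum_add_sum_compl {a, b} y.1
    have hcompl : ∑ j ∈ {a, b}ᶜ, x.1 j = ∑ j ∈ {a, b}ᶜ, y.1 j :=
      sum_congr rfl fun j hj => hrest j (by simp_all) (by simp_all)
    rw [sum_pair hab, x.2] at hx
    rw [sum_pair hab, y.2] at hy
    omega
  rcases lt_or_gt_of_ne ((hmem a).mpr (.inl rfl)) with hlt | hlt
  · exact ⟨a, b, _, hab, by omega, by omega, move_eq_of_lt hrest hsum hlt⟩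
  · refine ⟨b, a, _, hab.symm, by omega, by omega,
      move_eq_of_lt (fun j hjb hja => hrest j hja hjb) (by omega) (by omega)⟩

lemma adj_move {x : SRVertex m n} {k l : Fin m} {c : ℕ} (hkl : k ≠ l) (hc : 0 < c)
    (hcl : c ≤ x.1 l) : (SR m n).Adj x ⟨move x.1 k l c, (sum_move hkl hcl).trans x.2⟩ := by
  change #{j | x.1 j ≠ move x.1 k l c j} = 2
  simp_rw [move_ne_iff hkl hc hcl]
  rw [← card_pair hkl]
  congr 1
  ext j
  simp

lemma sum_neighborFinset_eq_sum_move (x : SRVertex m n) (f : (Fin m → ℕ) → ℝ) :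
    ∑ y ∈ (SR m n).neighborFinset x, f y.1
      = ∑ k, ∑ l ∈ univ.erase k, ∑ c ∈ Icc 1 (x.1 l), f (move x.1 k l c) := by
  simp_rw [sum_sigma']
  symm
  have mem_moves {k l : Fin m} {c : ℕ} :
      ⟨k, l, c⟩ ∈ univ.sigma (fun k => (univ.erase k).sigma fun l => Icc 1 (x.1 l)) ↔
        k ≠ l ∧ 0 < c ∧ c ≤ x.1 l := by
    simp [Nat.one_le_iff_ne_zero, Nat.pos_iff_ne_zero, eq_comm]
  refine sum_bij (fun p hp => ⟨move x.1 p.1 p.2.1 p.2.2,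
    (sum_move (mem_moves.mp hp).1 (mem_moves.mp hp).2.2).trans x.2⟩) ?_ ?_ ?_ fun _ _ => rfl
  · rintro ⟨k, l, c⟩ hp
    obtain ⟨hkl, hc, hcl⟩ := mem_moves.mp hp
    exact (SimpleGraph.mem_neighborFinset _ _ _).mpr (adj_move hkl hc hcl)
  · rintro ⟨k, l, c⟩ hp ⟨k', l', c'⟩ hp' h
    obtain ⟨hkl, hc, hcl⟩ := mem_moves.mp hp
    obtain ⟨hkl', hc', hcl'⟩ := mem_moves.mp hp'
    obtain ⟨rfl, rfl, rfl⟩ := move_inj hkl hc hcl hkl' hc' hcl' (congrArg Subtype.val h)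
    rfl
  · intro y hy
    obtain ⟨k, l, c, hkl, hc, hcl, hy⟩ :=
      exists_move_of_adj ((SimpleGraph.mem_neighborFinset _ _ _).mp hy)
    exact ⟨⟨k, l, c⟩, mem_moves.mpr ⟨hkl, hc, hcl⟩, Subtype.ext hy⟩

def posInd (S : Finset (Fin m)) (x : Fin m → ℕ) : ℝ :=
  if ∀ a ∈ S, 0 < x a then 1 else 0

lemma posInd_erase_mul (S : Finset (Fin m)) (a : Fin m) (x : Fin m → ℕ) :
    posInd (S.erase a) x * x a = posInd S x * x a := by
  rcases Nat.eq_zero_or_pos (x a) with h | h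
  · simp [h]
  · have : (∀ b ∈ S.erase a, 0 < x b) ↔ ∀ b ∈ S, 0 < x b :=
      ⟨fun hS b hb => if hba : b = a then hba ▸ h else hS b (mem_erase.mpr ⟨hba, hb⟩),
        fun hS b hb => hS b (mem_of_mem_erase hb)⟩
    simp only [posInd, this]

lemma posInd_move {T : Finset (Fin m)} {x : Fin m → ℕ} {k l : Fin m} {c : ℕ}
    (hc : c ∈ Icc 1 (x l)) :
    posInd T (move x k l c) = if l ∈ T ∧ c = x l then 0 else posInd (T.erase k) x := by
  rw [mem_Icc] at hc
  have hpos : (∀ a ∈ T, 0 < move x k l c a) ↔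
      ¬(l ∈ T ∧ c = x l) ∧ ∀ a ∈ T.erase k, 0 < x a := by
    constructor
    · intro h
      refine ⟨fun ⟨hl, hcl⟩ => by simpa [move, hcl] using h l hl, fun a ha => ?_⟩
      have := h a (mem_of_mem_erase ha)
      simp only [move, if_neg (ne_of_mem_erase ha)] at this
      split_ifs at this with hal
      · subst hal; omega
      · exact this
    · rintro ⟨hl, h⟩ a ha
      unfold move
      split_ifs with hal hak
      · have hne : c ≠ x l := fun hcl => hl ⟨hal ▸ ha, hcl⟩
        omega
      · omega
      · exact h a (mem_erase.mpr ⟨hak, ha⟩)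
  simp only [posInd, hpos]
  split_ifs <;> tauto

lemma sum_posInd_move (T : Finset (Fin m)) (x : Fin m → ℕ) {k l : Fin m} (hkl : k ≠ l) :
    ∑ c ∈ Icc 1 (x l), posInd T (move x k l c)
      = posInd (T.erase k) x * ((x l : ℝ) - if l ∈ T then 1 else 0) := by
  rw [sum_congr rfl fun c hc => posInd_move (T := T) (x := x) hc]
  by_cases hl : l ∈ T
  · rcases Nat.eq_zero_or_pos (x l) with h0 | hpos
    · have : posInd (T.erase k) x = 0 :=
        if_neg fun h => (h l (mem_erase.mpr ⟨hkl.symm, hl⟩)).ne' h0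
      simp [h0, this]
    · have hmem : x l ∈ Icc 1 (x l) := mem_Icc.mpr ⟨hpos, le_rfl⟩
      simp only [hl, true_and, if_true]
      rw [← sum_erase_add _ _ hmem, if_pos rfl, add_zero,
        sum_congr rfl fun c hc => if_neg (ne_of_mem_erase hc), sum_const,
        card_erase_of_mem hmem, Nat.card_Icc, nsmul_eq_mul, Nat.cast_sub (by omega)]
      push_cast
      ring
  · simp [hl, mul_comm]

def posVec (n : ℕ) (S : Finset (Fin m)) : SRVertex m n → ℝ := fun x => posInd S x.1

def eigenvalue (m n t : ℕ) : ℝ := ((n : ℝ) - t) * ((m : ℝ) - t) - n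

lemma sum_posInd_erase_mul (T : Finset (Fin m)) {x : Fin m → ℕ} (hx : ∑ i, x i = n) :
    ∑ k, posInd (T.erase k) x * ((n : ℝ) - #T - ((x k : ℝ) - if k ∈ T then 1 else 0))
      = eigenvalue m n #T * posInd T x
        + ((n : ℝ) - #T + 1) * ∑ a ∈ T, posInd (T.erase a) x := by
  have hsplit : ∀ k,
      posInd (T.erase k) x * ((n : ℝ) - #T - ((x k : ℝ) - if k ∈ T then 1 else 0))
      = posInd (T.erase k) x * ((n : ℝ) - #T + if k ∈ T then 1 else 0) - posInd T x * x k := by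
    intro k
    rw [← posInd_erase_mul]
    ring
  have hT : ∑ k ∈ T, posInd (T.erase k) x * ((n : ℝ) - #T + if k ∈ T then 1 else 0)
      = ((n : ℝ) - #T + 1) * ∑ k ∈ T, posInd (T.erase k) x := by
    rw [mul_sum]
    exact sum_congr rfl fun k hk => by rw [if_pos hk, mul_comm]
  have hTc : ∑ k ∈ Tᶜ, posInd (T.erase k) x * ((n : ℝ) - #T + if k ∈ T then 1 else 0)
      = ((m : ℝ) - #T) * ((n : ℝ) - #T) * posInd T x := by
    rw [sum_congr rfl fun k hk => by
      rw [erase_eq_of_notMem (mem_compl.mp hk), if_neg (mem_compl.mp hk), add_zero], sum_const,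
      card_compl, Fintype.card_fin, nsmul_eq_mul, Nat.cast_sub (by simpa using card_le_univ T)]
    ring
  rw [sum_congr rfl fun k _ => hsplit k, sum_sub_distrib, ← mul_sum, ← Nat.cast_sum, hx,
    ← sum_add_sum_compl T, hT, hTc, eigenvalue]
  ring

lemma adjMatrix_mulVec_posVec (T : Finset (Fin m)) :
    (SR m n).adjMatrix ℝ *ᵥ posVec n T
      = eigenvalue m n #T • posVec n T
        + ((n : ℝ) - #T + 1) • ∑ a ∈ T, posVec n (T.erase a) := by
  funext x
  have hb : ∑ l, ((x.1 l : ℝ) - if l ∈ T then 1 else 0) = n - #T := by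
    rw [sum_sub_distrib, ← Nat.cast_sum, x.2, sum_boole, filter_mem_eq_inter, univ_inter]
  rw [SimpleGraph.adjMatrix_mulVec_apply]
  show ∑ y ∈ (SR m n).neighborFinset x, posInd T y.1 = _
  have hk : ∀ k, ∑ l ∈ univ.erase k, ∑ c ∈ Icc 1 (x.1 l), posInd T (move x.1 k l c)
      = posInd (T.erase k) x.1 * ((n : ℝ) - #T - ((x.1 k : ℝ) - if k ∈ T then 1 else 0)) := by
    intro k
    rw [sum_congr rfl fun l hl => sum_posInd_move T x.1 (ne_of_mem_erase hl).symm, ← mul_sum,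
      sum_erase_eq_sub (mem_univ k), hb]
  rw [sum_neighborFinset_eq_sum_move, sum_congr rfl fun k _ => hk k, sum_posInd_erase_mul T x.2]
  simp only [posVec, Pi.add_apply, Pi.smul_apply, Finset.sum_apply, smul_eq_mul]

-- Forced by `eigvecCoeff_mul_eigenvalue_sub`, as `λ_t - λ_s = -(t - s)(m + n - t - s)`.
noncomputable def eigvecCoeff (m n t s : ℕ) : ℝ :=
  ∏ j ∈ Ico s t, -((n : ℝ) - j) / ((m : ℝ) + n - t - j)

lemma eigvecCoeff_self (t : ℕ) : eigvecCoeff m n t t = 1 := by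
  simp [eigvecCoeff]

lemma eigvecCoeff_mul_eigenvalue_sub {s t : ℕ} (htn : t ≤ n) (htm : t < m) (hst : s ≤ t) :
    eigvecCoeff m n t s * (eigenvalue m n t - eigenvalue m n s)
      = eigvecCoeff m n t (s + 1) * (((n : ℝ) - s) * ((t : ℝ) - s)) := by
  rcases hst.eq_or_lt with rfl | hlt
  · simp
  have hD : (m : ℝ) + n - t - s ≠ 0 := by
    have : (t : ℝ) + 1 ≤ m := by exact_mod_cast htm
    have : (s : ℝ) + 1 ≤ n := by exact_mod_cast hlt.trans_le htn
    linarith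
  rw [eigvecCoeff, prod_eq_prod_Ico_succ_bot hlt, ← eigvecCoeff, eigenvalue, eigenvalue]
  field_simp
  ring

noncomputable def eigvec (n : ℕ) (T : Finset (Fin m)) : SRVertex m n → ℝ :=
  ∑ S ∈ T.powerset, eigvecCoeff m n #T #S • posVec n S

theorem adjMatrix_mulVec_eigvec (T : Finset (Fin m)) (htn : #T ≤ n) (htm : #T < m) :
    (SR m n).adjMatrix ℝ *ᵥ eigvec n T = eigenvalue m n #T • eigvec n T := by
  set c := eigvecCoeff m n #T
  set f : Finset (Fin m) → SRVertex m n → ℝ := fun U => (c (#U + 1) * ((n : ℝ) - #U)) • posVec n U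
  have hlower : ∀ S ∈ T.powerset,
      ∑ a ∈ S, (c #S * ((n : ℝ) - #S + 1)) • posVec n (S.erase a) = ∑ a ∈ S, f (S.erase a) := by
    intro S _
    refine sum_congr rfl fun a ha => ?_
    simp only [f, ← card_erase_add_one ha]
    push_cast
    ring_nf
  calc (SR m n).adjMatrix ℝ *ᵥ eigvec n T
      = ∑ S ∈ T.powerset, c #S • ((SR m n).adjMatrix ℝ *ᵥ posVec n S) := by
        simp only [eigvec, mulVec_sum, mulVec_smul, c]
    _ = ∑ S ∈ T.powerset, (c #S * eigenvalue m n #S) • posVec n S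
          + ∑ S ∈ T.powerset, ∑ a ∈ S,
              (c #S * ((n : ℝ) - #S + 1)) • posVec n (S.erase a) := by
        rw [← sum_add_distrib]
        refine sum_congr rfl fun S _ => ?_
        simp only [adjMatrix_mulVec_posVec, smul_add, Finset.smul_sum, smul_smul]
    _ = ∑ S ∈ T.powerset, (c #S * eigenvalue m n #S) • posVec n S
          + ∑ S ∈ T.powerset, (#T - #S) • (c (#S + 1) * ((n : ℝ) - #S)) • posVec n S := by
        rw [sum_congr rfl hlower, sum_powerset_sum_erase]
    _ = ∑ S ∈ T.powerset, eigenvalue m n #T • c #S • posVec n S := by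
        rw [← sum_add_distrib]
        refine sum_congr rfl fun S hS => ?_
        have hST := card_le_card (mem_powerset.mp hS)
        rw [← Nat.cast_smul_eq_nsmul ℝ, smul_smul, smul_smul, ← add_smul, Nat.cast_sub hST]
        congr 1
        linear_combination -(eigvecCoeff_mul_eigenvalue_sub htn htm hST)
    _ = eigenvalue m n #T • eigvec n T := by rw [eigvec, Finset.smul_sum]

lemma exists_vertex_pos_iff (S : Finset (Fin m)) (hS : S.Nonempty) (hSn : #S ≤ n) :
    ∃ x : SRVertex m n, ∀ a, 0 < x.1 a ↔ a ∈ S := by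
  obtain ⟨a₀, ha₀⟩ := hS
  refine ⟨⟨fun a => (if a ∈ S then 1 else 0) + if a = a₀ then n - #S else 0, ?_⟩,
    fun a => ?_⟩
  · rw [sum_add_distrib, sum_boole, sum_ite_eq' univ a₀, if_pos (mem_univ _)]
    simp only [filter_mem_eq_inter, univ_inter, Nat.cast_id]
    omega
  · by_cases ha : a ∈ S <;> by_cases ha' : a = a₀ <;> simp_all

lemma sum_powerset_eq_zero_of_sum_smul_posVec_eq_zero {a : Finset (Fin m) → ℝ}
    (h : ∑ S, a S • posVec n S = 0) (S : Finset (Fin m)) (hS : S.Nonempty) (hSn : #S ≤ n) :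
    ∑ U ∈ S.powerset, a U = 0 := by
  obtain ⟨x, hx⟩ := exists_vertex_pos_iff S hS hSn
  have hval : ∀ U, posVec n U x = if U ⊆ S then 1 else 0 := fun U => by
    simp only [posVec, posInd, hx, subset_iff]
  have := congrFun h x
  simp only [Finset.sum_apply, Pi.smul_apply, hval, smul_eq_mul, mul_ite, mul_one, mul_zero,
    ← sum_filter, Pi.zero_apply] at this
  rwa [show ({U | U ⊆ S} : Finset (Finset (Fin m))) = S.powerset by ext; simp] at this

lemma eq_neg_one_pow_mul_of_sum_smul_posVec_eq_zero {a : Finset (Fin m) → ℝ}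
    (h : ∑ S, a S • posVec n S = 0) (S : Finset (Fin m)) (hSn : #S ≤ n) :
    a S = (-1) ^ #S * a ∅ := by
  refine sub_eq_zero.mp
    (eq_zero_of_sum_powerset_eq_zero (f := fun U => a U - (-1) ^ #U * a ∅) (fun S hS => ?_) S hSn)
  rcases S.eq_empty_or_nonempty with rfl | hne
  · simp
  have halt : ∑ U ∈ S.powerset, (-1 : ℝ) ^ #U = 0 := by
    exact_mod_cast sum_powerset_neg_one_pow_card_of_nonempty hne
  rw [sum_sub_distrib, ← sum_mul, halt, zero_mul, sub_zero,
    sum_powerset_eq_zero_of_sum_smul_posVec_eq_zero h S hne hS]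

lemma sum_smul_eigvec {t : ℕ} (d : {T : Finset (Fin m) // #T = t} → ℝ) :
    ∑ T, d T • eigvec n T.1
      = ∑ S, (eigvecCoeff m n t #S * ∑ T, if S ⊆ T.1 then d T else 0) • posVec n S := by
  calc ∑ T, d T • eigvec n T.1
      = ∑ T, ∑ S, if S ⊆ T.1 then (eigvecCoeff m n t #S * d T) • posVec n S else 0 := by
        refine sum_congr rfl fun T _ => ?_
        rw [eigvec, T.2, Finset.smul_sum, ← univ_inter T.1.powerset, ← sum_ite_mem]
        simp only [mem_powerset, smul_smul, mul_comm]
    _ = _ := by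
        rw [sum_comm]
        refine sum_congr rfl fun S _ => ?_
        rw [mul_sum, sum_smul]
        refine sum_congr rfl fun T _ => ?_
        split_ifs <;> simp

noncomputable def eigvecComb (m n t : ℕ) :
    ({T : Finset (Fin m) // #T = t} → ℝ) →ₗ[ℝ] (SRVertex m n → ℝ) :=
  Fintype.linearCombination ℝ fun T => eigvec n T.1

lemma exists_const_of_eigvecComb_eq_zero {t : ℕ} (htn : t ≤ n)
    {d : {T : Finset (Fin m) // #T = t} → ℝ} (hd : eigvecComb m n t d = 0) :
    ∃ γ, (∀ T, d T = γ) ∧ (t < n → t < m → γ = 0) := by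
  rw [eigvecComb, Fintype.linearCombination_apply, sum_smul_eigvec] at hd
  set A : Finset (Fin m) → ℝ :=
    fun S => eigvecCoeff m n t #S * ∑ T, if S ⊆ T.1 then d T else 0
  have hrel : ∀ S, #S ≤ n → A S = (-1) ^ #S * A ∅ :=
    eq_neg_one_pow_mul_of_sum_smul_posVec_eq_zero hd
  have htop : ∀ T, A T.1 = d T := fun T => by
    have hT : ∀ T' : {T : Finset (Fin m) // #T = t}, T.1 ⊆ T'.1 ↔ T' = T := fun T' =>
      ⟨fun h => (Subtype.ext (eq_of_subset_of_card_le h (by rw [T.2, T'.2]))).symm,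
        fun h => h ▸ subset_rfl⟩
    simp only [A, hT, sum_ite_eq', mem_univ, if_true, T.2, eigvecCoeff_self, one_mul]
  refine ⟨(-1) ^ t * A ∅, fun T => by rw [← htop, hrel T.1 (T.2.trans_le htn), T.2],
    fun htn' htm => ?_⟩
  obtain ⟨S, -, hS⟩ := exists_subset_card_eq (s := (univ : Finset (Fin m))) (n := t + 1)
    (by simpa using htm)
  have hAS : A S = 0 := by
    refine mul_eq_zero_of_right _ (sum_eq_zero fun T _ => if_neg fun h => ?_)
    have := card_le_card h
    omega
  have := hrel S (by omega)
  rw [hAS, hS, pow_succ] at this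
  linear_combination this

lemma ker_eigvecComb_le_span_one {t : ℕ} (htn : t ≤ n) :
    LinearMap.ker (eigvecComb m n t) ≤ ℝ ∙ 1 := fun d hd => by
  obtain ⟨γ, hγ, -⟩ := exists_const_of_eigvecComb_eq_zero htn (LinearMap.mem_ker.mp hd)
  exact Submodule.mem_span_singleton.mpr ⟨γ, funext fun T => by simp [hγ]⟩

lemma ker_eigvecComb_eq_bot {t : ℕ} (htn : t < n) (htm : t < m) :
    LinearMap.ker (eigvecComb m n t) = ⊥ := eq_bot_iff.mpr fun d hd => by
  obtain ⟨γ, hγ, hγ0⟩ := exists_const_of_eigvecComb_eq_zero htn.le (LinearMap.mem_ker.mp hd)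
  exact (Submodule.mem_bot ℝ).mpr (funext fun T => by simp [hγ, hγ0 htn htm])

lemma range_eigvecComb_le_eigenspace {t : ℕ} (htn : t ≤ n) (htm : t < m) :
    LinearMap.range (eigvecComb m n t)
      ≤ Module.End.eigenspace (Matrix.toLin' ((SR m n).adjMatrix ℝ)) (eigenvalue m n t) := by
  rw [eigvecComb, Fintype.range_linearCombination, Submodule.span_le]
  rintro _ ⟨⟨T, rfl⟩, rfl⟩
  rw [SetLike.mem_coe, Module.End.mem_eigenspace_iff, Matrix.toLin'_apply]
  exact adjMatrix_mulVec_eigvec T htn htm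

lemma choose_sub_finrank_ker_le_finrank_eigenspace {t : ℕ} (htn : t ≤ n) (htm : t < m) :
    m.choose t - Module.finrank ℝ (LinearMap.ker (eigvecComb m n t))
      ≤ Module.finrank ℝ
          (Module.End.eigenspace (Matrix.toLin' ((SR m n).adjMatrix ℝ)) (eigenvalue m n t)) := by
  have hrank := LinearMap.finrank_range_add_finrank_ker (eigvecComb m n t)
  rw [Module.finrank_fintype_fun_eq_card, Fintype.card_finset_len, Fintype.card_fin] at hrank
  have := Submodule.finrank_mono (range_eigvecComb_le_eigenspace htn htm)
  omega

end SR

/-- For `0 ≤ i ≤ min(m,n) - 1`, the eigenvalue `(n-i)(m-i) - n` of the adjacency matrix of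
`SR(m,n)` has multiplicity at least `choose m i`; and if `n < m` then the eigenvalue `-n`
has multiplicity at least `choose m n - 1`. -/
theorem SR_common_spectrum_lower_bounds (m n : ℕ) (hm : 1 ≤ m) (hn : 1 ≤ n) :
    (∀ i : ℕ, i ≤ min m n - 1 →
      Nat.choose m i ≤
        Module.finrank ℝ
          (Module.End.eigenspace (Matrix.toLin' ((SR m n).adjMatrix ℝ))
            ((((n : ℤ) - i) * ((m : ℤ) - i) - n : ℤ) : ℝ))) ∧
    (n < m →
      Nat.choose m n - 1 ≤
        Module.finrank ℝ
          (Module.End.eigenspace (Matrix.toLin' ((SR m n).adjMatrix ℝ)) (-(n : ℝ)))) := by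
  refine ⟨fun i hi => ?_, fun hnm => ?_⟩
  · have hbound := SR.choose_sub_finrank_ker_le_finrank_eigenspace (m := m) (n := n)
      (t := i) (by omega) (by omega)
    rw [SR.ker_eigvecComb_eq_bot (by omega) (by omega), finrank_bot, Nat.sub_zero] at hbound
    rwa [show ((((n : ℤ) - i) * ((m : ℤ) - i) - n : ℤ) : ℝ) = SR.eigenvalue m n i by
      push_cast [SR.eigenvalue]; ring]
  · have hker : Module.finrank ℝ (LinearMap.ker (SR.eigvecComb m n n)) ≤ 1 :=
      (Submodule.finrank_mono (SR.ker_eigvecComb_le_span_one le_rfl)).trans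
        ((finrank_span_le_card {1}).trans (by simp))
    have hbound := SR.choose_sub_finrank_ker_le_finrank_eigenspace le_rfl hnm
    rw [show SR.eigenvalue m n n = -(n : ℝ) by simp [SR.eigenvalue]] at hbound
    omega
end

section
/- Let m ≥ 1. Then the graph SR(m,n) is connected, and its diameter (the maximum over all pairs of vertices of the graph distance) equals min(m−1, n). -/
open Matrix Polynomial

/-!
An edge of `SR(m,n)` moves mass from one coordinate to another, so it raises exactly one
coordinate; hence a walk from `x` to `y` has length at least `#{i | x i < y i}`. With
`k = min (m-1) n`, the vertices `n e₀` and `(n-k) e₀ + e₁ + ⋯ + e_k` are therefore at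
distance at least `k`. Conversely, moving as much mass as possible from a coordinate where
`x > y` to one where `x < y` matches at least one more coordinate of `y` and strictly lowers
the deficit `∑ (y - x)`. The last such step matches two coordinates, so this walk has length
at most `#{i | x i ≠ y i} - 1 ≤ m - 1` and at most `∑ (y - x) ≤ n`.
-/

open Finset

namespace SR

variable {m n : ℕ}

def transfer (x : SRVertex m n) (i j : Fin m) (t : ℕ) (ht : t ≤ x.1 i) : SRVertex m n :=
  ⟨x.1 - Pi.single i t + Pi.single j t, by
    have hle : ∀ a ∈ (univ : Finset (Fin m)), (Pi.single i t : Fin m → ℕ) a ≤ x.1 a := by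
      intro a _
      rcases eq_or_ne a i with rfl | ha
      · simpa using ht
      · simp [ha]
    have hxi : x.1 i ≤ n := (single_le_sum (fun _ _ => Nat.zero_le _) (mem_univ i)).trans_eq x.2
    simp only [Pi.add_apply, Pi.sub_apply, sum_add_distrib, sum_tsub_distrib _ hle,
      sum_pi_single', mem_univ, if_true, x.2]
    omega⟩

section transfer

variable (x : SRVertex m n) {i j : Fin m} {t : ℕ} (ht : t ≤ x.1 i)

lemma transfer_apply_left (hij : i ≠ j) : (transfer x i j t ht).1 i = x.1 i - t := by
  simp [transfer, hij]

lemma transfer_apply_right (hij : i ≠ j) : (transfer x i j t ht).1 j = x.1 j + t := by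
  simp [transfer, hij.symm]

lemma transfer_apply_of_ne {a : Fin m} (hai : a ≠ i) (haj : a ≠ j) :
    (transfer x i j t ht).1 a = x.1 a := by
  simp [transfer, hai, haj]

lemma adj_transfer (hij : i ≠ j) (ht₀ : 0 < t) : (SR m n).Adj x (transfer x i j t ht) := by
  change #{a | x.1 a ≠ (transfer x i j t ht).1 a} = 2
  have : ({a | x.1 a ≠ (transfer x i j t ht).1 a} : Finset (Fin m)) = {i, j} := by
    ext a
    simp only [mem_filter, mem_univ, true_and, mem_insert, mem_singleton]
    by_cases hai : a = i
    · subst hai; simp only [transfer_apply_left x ht hij, true_or, iff_true]; omega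
    by_cases haj : a = j
    · subst haj; simp only [transfer_apply_right x ht hij, or_true, iff_true]; omega
    simp [transfer_apply_of_ne x ht hai haj, hai, haj]
  rw [this, card_pair hij]

end transfer

lemma exists_lt_of_ne {x y : SRVertex m n} (hxy : x ≠ y) : ∃ i, x.1 i < y.1 i := by
  by_contra! h
  have hsum : ∑ i, y.1 i = ∑ i, x.1 i := by rw [x.2, y.2]
  exact hxy (Subtype.ext (funext fun i =>
    ((sum_eq_sum_iff_of_le fun i _ => h i).mp hsum i (mem_univ i)).symm))

lemma card_lt_add_card_gt (x y : SRVertex m n) :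
    #{i | x.1 i < y.1 i} + #{i | y.1 i < x.1 i} = #{i | x.1 i ≠ y.1 i} := by
  rw [← card_union_of_disjoint (disjoint_filter.2 fun _ _ h h' => lt_asymm h h'),
    ← filter_or]
  simp only [ne_iff_lt_or_gt]

lemma two_le_card_ne_of_ne {x y : SRVertex m n} (hxy : x ≠ y) : 2 ≤ #{i | x.1 i ≠ y.1 i} := by
  obtain ⟨i, hi⟩ := exists_lt_of_ne hxy
  obtain ⟨j, hj⟩ := exists_lt_of_ne (Ne.symm hxy)
  rw [← card_lt_add_card_gt]
  have h₁ : 0 < #{i | x.1 i < y.1 i} := card_pos.2 ⟨i, by simpa using hi⟩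
  have h₂ : 0 < #{i | y.1 i < x.1 i} := card_pos.2 ⟨j, by simpa using hj⟩
  omega

lemma card_lt_le_one_of_adj {x y : SRVertex m n} (h : (SR m n).Adj x y) :
    #{i | x.1 i < y.1 i} ≤ 1 := by
  obtain ⟨j, hj⟩ := exists_lt_of_ne (Ne.symm h.ne)
  have hdec : 0 < #{i | y.1 i < x.1 i} := card_pos.2 ⟨j, by simpa using hj⟩
  have := card_lt_add_card_gt x y
  change #{i | x.1 i ≠ y.1 i} = 2 at h
  omega

lemma card_lt_le_length {x y : SRVertex m n} (w : (SR m n).Walk x y) :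
    #{i | x.1 i < y.1 i} ≤ w.length := by
  induction w with
  | nil => simp
  | @cons u v y huv w ih =>
    have hsub : ({i | u.1 i < y.1 i} : Finset (Fin m)) ⊆
        ({i | v.1 i < y.1 i} : Finset (Fin m)) ∪ ({i | u.1 i < v.1 i} : Finset (Fin m)) := by
      intro i
      simp only [mem_filter, mem_univ, true_and, mem_union]
      omega
    have := (card_le_card hsub).trans (card_union_le _ _)
    have := card_lt_le_one_of_adj huv
    rw [SimpleGraph.Walk.length_cons]
    omega

lemma card_lt_le_edist (x y : SRVertex m n) :
    (#{i | x.1 i < y.1 i} : ℕ∞) ≤ (SR m n).edist x y := by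
  by_cases hr : (SR m n).Reachable x y
  · obtain ⟨w, hw⟩ := hr.exists_walk_length_eq_edist
    rw [← hw]
    exact_mod_cast card_lt_le_length w
  · simp [SimpleGraph.edist_eq_top_of_not_reachable hr]

def deficit (x y : SRVertex m n) : ℕ := ∑ i, (y.1 i - x.1 i)

lemma deficit_le (x y : SRVertex m n) : deficit x y ≤ n :=
  calc deficit x y ≤ ∑ i, y.1 i := sum_le_sum fun _ _ => Nat.sub_le _ _
    _ = n := y.2

lemma exists_adj_closer {x y : SRVertex m n} (hxy : x ≠ y) :
    ∃ x', (SR m n).Adj x x' ∧ #{i | x'.1 i ≠ y.1 i} < #{i | x.1 i ≠ y.1 i} ∧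
      deficit x' y < deficit x y := by
  obtain ⟨i, hi⟩ := exists_lt_of_ne (Ne.symm hxy)
  obtain ⟨j, hj⟩ := exists_lt_of_ne hxy
  have hij : i ≠ j := by rintro rfl; omega
  set t := min (x.1 i - y.1 i) (y.1 j - x.1 j) with htdef
  have ht : t ≤ x.1 i := (min_le_left _ _).trans (Nat.sub_le _ _)
  set x' := transfer x i j t ht
  have hx'i : x'.1 i = x.1 i - t := transfer_apply_left x ht hij
  have hx'j : x'.1 j = x.1 j + t := transfer_apply_right x ht hij
  have hx'a : ∀ a, a ≠ i → a ≠ j → x'.1 a = x.1 a := fun a => transfer_apply_of_ne x ht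
  refine ⟨x', adj_transfer x ht hij (by omega), card_lt_card ?_, ?_⟩
  · have hsub :
        ({a | x'.1 a ≠ y.1 a} : Finset (Fin m)) ⊆ ({a | x.1 a ≠ y.1 a} : Finset (Fin m)) := by
      intro a
      simp only [mem_filter, mem_univ, true_and]
      by_cases hai : a = i
      · subst hai; omega
      by_cases haj : a = j
      · subst haj; omega
      rw [hx'a a hai haj]
      exact id
    -- the smaller of the two gaps is closed
    rw [ssubset_iff_of_subset hsub]
    rcases le_total (x.1 i - y.1 i) (y.1 j - x.1 j) with hle | hle
    · exact ⟨i, mem_filter.2 ⟨mem_univ _, by omega⟩, fun h => (mem_filter.1 h).2 <| by omega⟩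
    · exact ⟨j, mem_filter.2 ⟨mem_univ _, by omega⟩, fun h => (mem_filter.1 h).2 <| by omega⟩
  · refine sum_lt_sum (fun a _ => ?_) ⟨j, mem_univ j, by omega⟩
    by_cases hai : a = i
    · subst hai; omega
    by_cases haj : a = j
    · subst haj; omega
    rw [hx'a a hai haj]

lemma exists_walk_length_le (x y : SRVertex m n) :
    ∃ w : (SR m n).Walk x y,
      w.length ≤ #{i | x.1 i ≠ y.1 i} - 1 ∧ w.length ≤ deficit x y := by
  induction hd : deficit x y using Nat.strong_induction_on generalizing x with
  | _ d ih =>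
  by_cases hxy : x = y
  · subst hxy
    exact ⟨.nil, by simp, by simp⟩
  obtain ⟨x', hadj, hcard, hdef⟩ := exists_adj_closer hxy
  obtain ⟨w, hw₁, hw₂⟩ := ih _ (hd ▸ hdef) x' rfl
  have := two_le_card_ne_of_ne hxy
  exact ⟨.cons hadj w, by rw [SimpleGraph.Walk.length_cons]; omega,
    by rw [SimpleGraph.Walk.length_cons]; omega⟩

lemma edist_le (x y : SRVertex m n) : (SR m n).edist x y ≤ (min (m - 1) n : ℕ) := by
  obtain ⟨w, hw₁, hw₂⟩ := exists_walk_length_le x y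
  have hcard : #{i | x.1 i ≠ y.1 i} ≤ m := (card_filter_le _ _).trans (by simp)
  have := deficit_le x y
  exact (SimpleGraph.edist_le w).trans (by exact_mod_cast (by omega : w.length ≤ min (m - 1) n))

lemma exists_card_lt_eq (hm : 1 ≤ m) {k : ℕ} (hkm : k ≤ m - 1) (hkn : k ≤ n) :
    ∃ x y : SRVertex m n, #{i | x.1 i < y.1 i} = k := by
  let z : Fin m := ⟨0, hm⟩
  obtain ⟨s, hsz, hs⟩ := exists_subset_card_eq (s := univ.erase z) (n := k) (by simpa)
  have hz : z ∉ s := fun h => by simpa using hsz h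
  let x : SRVertex m n := ⟨Pi.single z n, by simp⟩
  let y : SRVertex m n := ⟨Pi.single z (n - k) + fun i => if i ∈ s then 1 else 0, by
    simp only [Pi.add_apply, sum_add_distrib, sum_pi_single', mem_univ, if_true, sum_boole,
      filter_mem_eq_inter, univ_inter, hs, Nat.cast_id]
    omega⟩
  refine ⟨x, y, (congrArg card (?_ : _ = s)).trans hs⟩
  ext i
  rcases eq_or_ne i z with rfl | hi
  · simp [x, y, hz]
  · by_cases his : i ∈ s <;> simp [x, y, hi, his]

lemma preconnected : (SR m n).Preconnected := fun x y =>
  let ⟨w, _⟩ := exists_walk_length_le x y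
  ⟨w⟩

lemma ediam_eq (hm : 1 ≤ m) : (SR m n).ediam = (min (m - 1) n : ℕ) := by
  obtain ⟨x, y, hxy⟩ := exists_card_lt_eq (n := n) hm (min_le_left _ _) (min_le_right _ _)
  exact le_antisymm (SimpleGraph.ediam_le_of_edist_le edist_le)
    (hxy ▸ (card_lt_le_edist x y).trans SimpleGraph.edist_le_ediam)

end SR

/-- For `m ≥ 1`, the graph `SR(m,n)` is connected and has diameter `min (m-1) n`. -/
theorem SR_diameter (m n : ℕ) (hm : 1 ≤ m) :
    (SR m n).Connected ∧ (SR m n).diam = min (m - 1) n := by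
  have : Nonempty (SRVertex m n) := ⟨⟨Pi.single ⟨0, hm⟩ n, by simp⟩⟩
  exact ⟨⟨SR.preconnected⟩, by rw [SimpleGraph.diam, SR.ediam_eq hm, ENat.toNat_natCast]⟩
end

section
/- The graph SR(m,n) contains no induced K_{1,1,4}: there do not exist adjacent vertices u, v of SR(m,n) and four pairwise distinct, pairwise nonadjacent vertices w₁, w₂, w₃, w₄, each of which is adjacent to both u and v. -/
open Matrix Polynomial

/-!
Let `u ~ v` differ exactly in the coordinates `a, b`, and sort the common neighbours `w` of `u`
and `v` by whether `w a` equals `u a`, equals `v a`, or neither. Two common neighbours with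
`w a = w' a = u a` both differ from `v` at `a`, so each differs from `v` in just one further
coordinate and they differ from each other in at most two. The case `w a = w' a = v a` is the same
with `u` in place of `v`. A common neighbour with `w a ∉ {u a, v a}` agrees with `u` off `{a, b}`,
so two of those again differ in at most two coordinates. Since all vertices have the same
coordinate sum, two distinct vertices never differ in exactly one coordinate; hence two distinct
common neighbours in the same class are adjacent, and among four of them two share a class.
-/

open Finset

section DiffSet

variable {ι α : Type*} [Fintype ι] [DecidableEq α]

def diffSet (x y : ι → α) : Finset ι := {i | x i ≠ y i}

@[simp]
lemma mem_diffSet {x y : ι → α} {i : ι} : i ∈ diffSet x y ↔ x i ≠ y i := by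
  simp [diffSet]

lemma diffSet_comm (x y : ι → α) : diffSet x y = diffSet y x := by
  ext i
  simp [ne_comm]

lemma diffSet_subset_union [DecidableEq ι] (x y z : ι → α) :
    diffSet x y ⊆ diffSet x z ∪ diffSet z y := by
  intro i
  simp only [mem_diffSet, mem_union]
  contrapose!
  exact fun h => h.1.trans h.2

lemma diffSet_eq_empty {x y : ι → α} : diffSet x y = ∅ ↔ x = y := by
  simp [diffSet, filter_eq_empty_iff, funext_iff]

lemma card_diffSet_ne_one {M : Type*} [AddCancelCommMonoid M] [DecidableEq M] {x y : ι → M}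
    (h : ∑ i, x i = ∑ i, y i) : #(diffSet x y) ≠ 1 := by
  classical
  intro h1
  obtain ⟨a, ha⟩ := card_eq_one.1 h1
  have hoff : ∀ i ∈ univ.erase a, x i = y i := by
    intro i hi
    by_contra hne
    have : i ∈ diffSet x y := mem_diffSet.2 hne
    rw [ha, mem_singleton] at this
    exact (ne_of_mem_erase hi) this
  rw [← add_sum_erase _ _ (mem_univ a), ← add_sum_erase _ _ (mem_univ a),
    sum_congr rfl hoff] at h
  exact mem_diffSet.1 (ha ▸ mem_singleton_self a) (add_right_cancel h)

lemma card_diffSet_le_two_of_eq_at {x y z : ι → α} {a : ι} (hx : #(diffSet x z) = 2)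
    (hy : #(diffSet y z) = 2) (hxa : x a ≠ z a) (hxy : x a = y a) : #(diffSet x y) ≤ 2 := by
  classical
  have hsub : diffSet x y ⊆ (diffSet x z).erase a ∪ (diffSet z y).erase a := by
    intro i hi
    have hia : i ≠ a := by rintro rfl; exact mem_diffSet.1 hi hxy
    simpa [mem_union, hia] using diffSet_subset_union x y z hi
  have hya : a ∈ diffSet z y := mem_diffSet.2 fun h => hxa (hxy.trans h.symm)
  calc #(diffSet x y)
      ≤ #((diffSet x z).erase a) + #((diffSet z y).erase a) :=
        (card_le_card hsub).trans (card_union_le _ _)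
    _ = 2 := by
        rw [card_erase_of_mem (mem_diffSet.2 hxa), card_erase_of_mem hya, diffSet_comm z, hy, hx]

lemma diffSet_subset_of_ne_of_ne {u v w : ι → α} {a : ι} (ha : a ∈ diffSet u v)
    (huv : 2 ≤ #(diffSet u v)) (hwu : #(diffSet w u) = 2) (hwv : #(diffSet w v) = 2)
    (hau : w a ≠ u a) (hav : w a ≠ v a) : diffSet w u ⊆ diffSet u v := by
  classical
  intro c hc
  by_contra hcuv
  have hcv : c ∈ diffSet w v := by
    simp only [mem_diffSet, not_not] at hc hcuv ⊢
    rwa [← hcuv]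
  have hac : a ≠ c := by rintro rfl; exact hcuv ha
  -- Both `diffSet w u` and `diffSet w v` are `{a, c}`, leaving only `a` for `diffSet u v`.
  have eq_pair : ∀ s : Finset ι, #s = 2 → a ∈ s → c ∈ s → s = {a, c} :=
    fun s hs has hcs =>
      (eq_of_subset_of_card_le (by simp [insert_subset_iff, has, hcs])
        (by rw [hs, card_pair hac])).symm
  have hsub : diffSet u v ⊆ {a} := by
    intro i hi
    have hi' := diffSet_subset_union u v w hi
    rw [diffSet_comm u w, eq_pair _ hwu (mem_diffSet.2 hau) hc,
      eq_pair _ hwv (mem_diffSet.2 hav) hcv, union_self, mem_insert, mem_singleton] at hi'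
    rcases hi' with rfl | rfl
    · exact mem_singleton_self i
    · exact absurd hi hcuv
  have := card_le_card hsub
  rw [card_singleton] at this
  omega

def coordClass (u v w : ι → α) (a : ι) : Fin 3 :=
  if w a = u a then 0 else if w a = v a then 1 else 2

lemma card_diffSet_le_two_of_coordClass_eq {u v w w' : ι → α} {a : ι}
    (ha : a ∈ diffSet u v) (huv : #(diffSet u v) = 2)
    (hwu : #(diffSet w u) = 2) (hwv : #(diffSet w v) = 2)
    (hwu' : #(diffSet w' u) = 2) (hwv' : #(diffSet w' v) = 2)
    (hclass : coordClass u v w a = coordClass u v w' a) : #(diffSet w w') ≤ 2 := by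
  classical
  have hne : u a ≠ v a := mem_diffSet.1 ha
  unfold coordClass at hclass
  split_ifs at hclass with hu hu' hv' hv hu' hv' hu' hv' <;> try omega
  · exact card_diffSet_le_two_of_eq_at hwv hwv' (hu ▸ hne) (hu.trans hu'.symm)
  · exact card_diffSet_le_two_of_eq_at hwu hwu' (hv ▸ hne.symm) (hv.trans hv'.symm)
  · have hsub : diffSet w w' ⊆ diffSet u v := by
      rw [← union_self (diffSet u v)]
      refine (diffSet_subset_union w w' u).trans (union_subset_union ?_ ?_)
      · exact diffSet_subset_of_ne_of_ne ha huv.ge hwu hwv hu hv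
      · rw [diffSet_comm]
        exact diffSet_subset_of_ne_of_ne ha huv.ge hwu' hwv' hu' hv'
    exact huv ▸ card_le_card hsub

end DiffSet

lemma SR_adj_iff {m n : ℕ} {x y : SRVertex m n} :
    (SR m n).Adj x y ↔ #(diffSet x.1 y.1) = 2 :=
  Iff.rfl

lemma SR_adj_of_card_diffSet_le_two {m n : ℕ} {x y : SRVertex m n} (hne : x ≠ y)
    (h : #(diffSet x.1 y.1) ≤ 2) : (SR m n).Adj x y := by
  have h0 : #(diffSet x.1 y.1) ≠ 0 := by
    rw [Ne, card_eq_zero, diffSet_eq_empty]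
    exact fun h => hne (Subtype.ext h)
  have h1 := card_diffSet_ne_one (x.2.trans y.2.symm)
  rw [SR_adj_iff]
  omega

/-- `SR(m,n)` contains no induced `K_{1,1,4}`: there are no adjacent vertices `u, v`
together with four pairwise distinct, pairwise nonadjacent vertices each adjacent
to both `u` and `v`. -/
theorem SR_no_induced_K114 (m n : ℕ) :
    ¬ ∃ (u v : SRVertex m n) (w : Fin 4 → SRVertex m n),
        (SR m n).Adj u v ∧
        (∀ i j : Fin 4, i ≠ j → w i ≠ w j ∧ ¬ (SR m n).Adj (w i) (w j)) ∧
        (∀ i : Fin 4, (SR m n).Adj u (w i) ∧ (SR m n).Adj v (w i)) := by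
  rintro ⟨u, v, w, huv, hw, hcommon⟩
  obtain ⟨a, ha⟩ : (diffSet u.1 v.1).Nonempty := card_pos.1 (by rw [SR_adj_iff.1 huv]; norm_num)
  obtain ⟨i, j, hij, hclass⟩ :=
    Fintype.exists_ne_map_eq_of_card_lt (fun i => coordClass u.1 v.1 (w i).1 a) (by simp)
  obtain ⟨hne, hnadj⟩ := hw i j hij
  exact hnadj <| SR_adj_of_card_diffSet_le_two hne <|
    card_diffSet_le_two_of_coordClass_eq ha huv (hcommon i).1.symm (hcommon i).2.symm
      (hcommon j).1.symm (hcommon j).2.symm hclass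
end
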